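/- arXiv:2603.21993 — 5 statements merged into one kernel-verified Lean document; each statement's English description precedes it below -/
import Mathlib

section
/- Let G be a finite group of order n, and suppose f : G → ℤ is a class function with f(g) = f(g⁻¹) for all g. If every element of G has order in {1,2,3,4,6}, then for every h coprime to n, f(gʰ) = f(g) for all g ∈ G, and consequently the Cayley colour graph Cay(G,f) is integral. -/
open Polynomial Matrix

namespace Stmt2Aux

/-- Polynomial certificate: with `q = X + X^5 + X^7 + X^11`,
`q^5 - 20 q^3 + 64 q` is divisible by `X^12 - 1`. -/
lemma cert : ((X:ℤ[X]) + X^5 + X^7 + X^11)^5 - 20*((X:ℤ[X]) + X^5 + X^7 + X^11)^3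
    + 64*((X:ℤ[X]) + X^5 + X^7 + X^11)
    = (X^43 + 5*X^39 + 5*X^37 + 10*X^35 + 25*X^33 + 21*X^31 + 50*X^29 + 60*X^27 + 65*X^25
      + 111*X^23 + 80*X^21 + 126*X^19 + 95*X^17 + 75*X^15 + 106*X^13 - 9*X^11 + 55*X^9
      - 4*X^7 - 65*X^5 + 20*X^3 - 64*X) * ((X:ℤ[X])^12 - 1) := by
  ring

lemma eval_charpoly' {ι : Type*} [Fintype ι] [DecidableEq ι] (B : Matrix ι ι ℂ) (t : ℂ) :
    B.charpoly.eval t = (t • (1 : Matrix ι ι ℂ) - B).det := by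
  rw [Matrix.charpoly, ← Polynomial.coe_evalRingHom, RingHom.map_det]
  congr 1
  ext i j
  by_cases h : i = j
  · subst h
    simp [Matrix.charmatrix_apply_eq, Matrix.one_apply]
  · simp [Matrix.charmatrix_apply_ne _ _ _ h, Matrix.one_apply_ne h]

lemma eig_of_root {ι : Type*} [Fintype ι] [DecidableEq ι] {B : Matrix ι ι ℂ} {t : ℂ}
    (ht : B.charpoly.IsRoot t) : ∃ w : ι → ℂ, w ≠ 0 ∧ B.mulVec w = t • w := by
  have hdet : (t • (1 : Matrix ι ι ℂ) - B).det = 0 := by rw [← eval_charpoly']; exact ht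
  obtain ⟨w, hw0, hw⟩ := Matrix.exists_mulVec_eq_zero_iff.mpr hdet
  refine ⟨w, hw0, ?_⟩
  rw [Matrix.sub_mulVec, Matrix.smul_mulVec, Matrix.one_mulVec, sub_eq_zero] at hw
  exact hw.symm

lemma trace_int {ι : Type*} [Fintype ι] [DecidableEq ι] (B : Matrix ι ι ℂ)
    (hB : B^5 - 20 * B^3 + 64 * B = 0) : ∃ k : ℤ, B.trace = (k : ℂ) := by
  have htr := Matrix.trace_eq_sum_roots_charpoly B
  have hS : ∀ r ∈ B.charpoly.roots, r ∈ (Int.castRingHom ℂ).range := by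
    intro r hr
    obtain ⟨w, hw0, hw⟩ := eig_of_root (Polynomial.isRoot_of_mem_roots hr)
    have hp : ∀ k : ℕ, (B ^ k).mulVec w = r ^ k • w := by
      intro k; induction k with
      | zero => simp [Matrix.one_mulVec]
      | succ k ih =>
          rw [pow_succ, ← Matrix.mulVec_mulVec, hw, Matrix.mulVec_smul, ih, smul_smul,
            pow_succ']
    have h20 : (20 : Matrix ι ι ℂ) = (20:ℂ) • (1 : Matrix ι ι ℂ) := by
      rw [← _root_.map_ofNat (algebraMap ℂ (Matrix ι ι ℂ)) 20, Algebra.algebraMap_eq_smul_one]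
    have h64 : (64 : Matrix ι ι ℂ) = (64:ℂ) • (1 : Matrix ι ι ℂ) := by
      rw [← _root_.map_ofNat (algebraMap ℂ (Matrix ι ι ℂ)) 64, Algebra.algebraMap_eq_smul_one]
    rw [h20, h64, smul_mul_assoc, smul_mul_assoc, one_mul, one_mul] at hB
    have h5 := congrArg (fun M : Matrix ι ι ℂ => M.mulVec w) hB
    simp only [Matrix.sub_mulVec, Matrix.add_mulVec, Matrix.zero_mulVec,
      Matrix.smul_mulVec, hp, hw] at h5
    rw [smul_smul, smul_smul, ← sub_smul, ← add_smul] at h5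
    rcases smul_eq_zero.mp h5 with h0 | h0
    swap
    · exact absurd h0 hw0
    have hfac : r * (r-2) * (r+2) * (r-4) * (r+4) = 0 := by linear_combination h0
    rcases mul_eq_zero.mp hfac with h1 | h1
    · rcases mul_eq_zero.mp h1 with h2 | h2
      · rcases mul_eq_zero.mp h2 with h3 | h3
        · rcases mul_eq_zero.mp h3 with h4 | h4
          · exact RingHom.mem_range.mpr ⟨0, by rw [h4]; simp⟩
          · exact RingHom.mem_range.mpr ⟨2, by rw [show r = 2 by linear_combination h4]; simp⟩
        · exact RingHom.mem_range.mpr ⟨-2, by rw [show r = -2 by linear_combination h3]; simp⟩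
      · exact RingHom.mem_range.mpr ⟨4, by rw [show r = 4 by linear_combination h2]; simp⟩
    · exact RingHom.mem_range.mpr ⟨-4, by rw [show r = -4 by linear_combination h1]; simp⟩
  obtain ⟨k, hk⟩ := RingHom.mem_range.mp
    (Subring.multiset_sum_mem ((Int.castRingHom ℂ).range) B.charpoly.roots hS)
  exact ⟨k, by rw [htr, ← hk]; rfl⟩

lemma trace_q_int {E : Type*} [AddCommGroup E] [Module ℂ E] [FiniteDimensional ℂ E]
    (A : Module.End ℂ E) (hA : A ^ 12 = 1) :
    ∃ k : ℤ, LinearMap.trace ℂ E (A + A^5 + A^7 + A^11) = (k : ℂ) := by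
  set b := Module.finBasis ℂ E with hb
  set C : Matrix (Fin (Module.finrank ℂ E)) (Fin (Module.finrank ℂ E)) ℂ :=
    LinearMap.toMatrixAlgEquiv b A with hC
  have hC12 : C ^ 12 = 1 := by
    rw [hC, ← _root_.map_pow, hA, _root_.map_one]
  have hcert := congrArg (Polynomial.aeval C) cert
  simp only [_root_.map_add, _root_.map_sub, _root_.map_mul, _root_.map_pow, _root_.map_ofNat, Polynomial.aeval_X,
    _root_.map_one] at hcert
  rw [hC12, sub_self, mul_zero] at hcert
  obtain ⟨k, hk⟩ := trace_int _ hcert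
  refine ⟨k, ?_⟩
  rw [LinearMap.trace_eq_matrix_trace ℂ b, ← hk]
  congr 1
  have h1 : LinearMap.toMatrix b b (A + A^5 + A^7 + A^11)
      = LinearMap.toMatrixAlgEquiv b (A + A^5 + A^7 + A^11) := rfl
  rw [h1, _root_.map_add, _root_.map_add, _root_.map_add, _root_.map_pow, _root_.map_pow, _root_.map_pow, ← hC]

lemma pow_pred {G : Type*} [Group G] (g : G) (m : ℕ) (h : g ^ (m+1) = 1) : g ^ m = g⁻¹ :=
  eq_inv_of_mul_eq_one_left (by rw [← pow_succ]; exact h)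

lemma pow_eq_self_or_inv {G : Type*} [Group G] {g : G}
    (hg : orderOf g ∈ ({1, 2, 3, 4, 6} : Set ℕ))
    {h : ℕ} (hcop : Nat.Coprime h (orderOf g)) : g ^ h = g ∨ g ^ h = g⁻¹ := by
  have hpow : g ^ orderOf g = 1 := pow_orderOf_eq_one g
  have hmod : g ^ (h % orderOf g) = g ^ h := pow_mod_orderOf g h
  have hgcd : Nat.gcd (h % orderOf g) (orderOf g) = 1 := by
    rw [← Nat.gcd_rec, Nat.gcd_comm]
    exact hcop
  simp only [Set.mem_insert_iff, Set.mem_singleton_iff] at hg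
  rcases hg with hm|hm|hm|hm|hm
  · left
    have hg1 : g = 1 := orderOf_eq_one_iff.mp hm
    simp [hg1]
  · rw [hm] at hpow hmod hgcd
    have hr : h % 2 = 0 ∨ h % 2 = 1 := by omega
    rcases hr with hr|hr
    · rw [hr] at hgcd; exact absurd hgcd (by decide)
    · left; rw [← hmod, hr, pow_one]
  · rw [hm] at hpow hmod hgcd
    have hr : h % 3 = 0 ∨ h % 3 = 1 ∨ h % 3 = 2 := by omega
    rcases hr with hr|hr|hr
    · rw [hr] at hgcd; exact absurd hgcd (by decide)
    · left; rw [← hmod, hr, pow_one]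
    · right; rw [← hmod, hr]; exact pow_pred g 2 hpow
  · rw [hm] at hpow hmod hgcd
    have hr : h % 4 = 0 ∨ h % 4 = 1 ∨ h % 4 = 2 ∨ h % 4 = 3 := by omega
    rcases hr with hr|hr|hr|hr
    · rw [hr] at hgcd; exact absurd hgcd (by decide)
    · left; rw [← hmod, hr, pow_one]
    · rw [hr] at hgcd; exact absurd hgcd (by decide)
    · right; rw [← hmod, hr]; exact pow_pred g 3 hpow
  · rw [hm] at hpow hmod hgcd
    have hr : h % 6 = 0 ∨ h % 6 = 1 ∨ h % 6 = 2 ∨ h % 6 = 3 ∨ h % 6 = 4 ∨ h % 6 = 5 := by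
      omega
    rcases hr with hr|hr|hr|hr|hr|hr
    · rw [hr] at hgcd; exact absurd hgcd (by decide)
    · left; rw [← hmod, hr, pow_one]
    · rw [hr] at hgcd; exact absurd hgcd (by decide)
    · rw [hr] at hgcd; exact absurd hgcd (by decide)
    · rw [hr] at hgcd; exact absurd hgcd (by decide)
    · right; rw [← hmod, hr]; exact pow_pred g 5 hpow

lemma f_pow {G : Type*} [Group G] (f : G → ℤ) (hinv : ∀ g : G, f g = f g⁻¹) {g : G}
    (hg : orderOf g ∈ ({1, 2, 3, 4, 6} : Set ℕ)) {h : ℕ}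
    (hcop : Nat.Coprime h (orderOf g)) : f (g ^ h) = f g := by
  rcases pow_eq_self_or_inv hg hcop with h' | h'
  · rw [h']
  · rw [h']; exact (hinv g).symm

end Stmt2Aux

/-- If every element of `G` has order in `{1,2,3,4,6}` then every integer-valued
inversion-invariant class function is fixed by all power maps coprime to `|G|`,
and consequently the Cayley colour graph is integral. -/
theorem stmt2 (G : Type*) [Group G] [Fintype G] [DecidableEq G]
    (f : G → ℤ) (hclass : ∀ x g : G, f (x * g * x⁻¹) = f g)
    (hinv : ∀ g : G, f g = f g⁻¹)
    (hord : ∀ g : G, orderOf g ∈ ({1, 2, 3, 4, 6} : Set ℕ)) :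
    (∀ h : ℕ, Nat.Coprime h (Fintype.card G) → ∀ g : G, f (g ^ h) = f g) ∧
      (∀ μ ∈ spectrum ℂ (Matrix.of fun g h : G => (f (g * h⁻¹) : ℂ)), ∃ k : ℤ, μ = (k : ℂ)) := by
  have hdvd12 : ∀ g : G, orderOf g ∣ 12 := by
    intro g
    have hg := hord g
    simp only [Set.mem_insert_iff, Set.mem_singleton_iff] at hg
    rcases hg with h|h|h|h|h <;> rw [h] <;> norm_num
  have h12 : ∀ g : G, g ^ 12 = 1 := fun g => orderOf_dvd_iff_pow_eq_one.mp (hdvd12 g)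
  have hfp : ∀ (c : ℕ), Nat.Coprime c 12 → ∀ g : G, f (g ^ c) = f g := fun c hc g =>
    Stmt2Aux.f_pow f hinv (hord g) (hc.coprime_dvd_right (hdvd12 g))
  constructor
  · intro h hcop g
    exact Stmt2Aux.f_pow f hinv (hord g) (hcop.coprime_dvd_right orderOf_dvd_card)
  · intro μ hμ
    set Mc : Matrix G G ℂ := Matrix.of (fun g h : G => (f (g * h⁻¹) : ℂ)) with hMc
    have hμ' : ¬ IsUnit (algebraMap ℂ (Matrix G G ℂ) μ - Mc) := spectrum.mem_iff.mp hμ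
    have hdet : (algebraMap ℂ (Matrix G G ℂ) μ - Mc).det = 0 := by
      by_contra hne
      exact hμ' ((Matrix.isUnit_iff_isUnit_det _).mpr (isUnit_iff_ne_zero.mpr hne))
    have hdet' : (μ • (1 : Matrix G G ℂ) - Mc).det = 0 := by
      rwa [Algebra.algebraMap_eq_smul_one] at hdet
    obtain ⟨v, hv0, hv⟩ := Matrix.exists_mulVec_eq_zero_iff.mpr hdet'
    have hMv : Mc.mulVec v = μ • v := by
      rw [Matrix.sub_mulVec, Matrix.smul_mulVec, Matrix.one_mulVec, sub_eq_zero] at hv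
      exact hv.symm
    set T : Module.End ℂ (G → ℂ) := Mc.mulVecLin with hT
    set E : Submodule ℂ (G → ℂ) := Module.End.eigenspace T μ with hE
    have hmemE : ∀ w : G → ℂ, w ∈ E ↔ Mc.mulVec w = μ • w := by
      intro w
      rw [hE, Module.End.mem_eigenspace_iff, hT, Matrix.mulVecLin_apply]
    have hvE : v ∈ E := (hmemE v).mpr hMv
    have hdpos : 0 < Module.finrank ℂ E :=
      Module.finrank_pos_iff_exists_ne_zero.mpr
        ⟨⟨v, hvE⟩, fun hc => hv0 (by simpa using congrArg Subtype.val hc)⟩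
    -- left translation operators
    let L : G → Module.End ℂ (G → ℂ) := fun x =>
      { toFun := fun w g' => w (x⁻¹ * g')
        map_add' := fun _ _ => rfl
        map_smul' := fun _ _ => rfl }
    have hLmul : ∀ x y : G, L x * L y = L (x * y) := by
      intro x y
      refine LinearMap.ext fun w => funext fun g' => ?_
      show w (y⁻¹ * (x⁻¹ * g')) = w ((x*y)⁻¹ * g')
      rw [_root_.mul_inv_rev, mul_assoc]
    have hL1 : L (1 : G) = 1 := by
      refine LinearMap.ext fun w => funext fun g' => ?_
      show w ((1:G)⁻¹ * g') = w g'
      rw [inv_one, one_mul]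
    have hTL : ∀ (x : G) (w : G → ℂ), Mc.mulVec (L x w) = L x (Mc.mulVec w) := by
      intro x w
      funext g'
      show ∑ k : G, Mc g' k * w (x⁻¹ * k) = ∑ k : G, Mc (x⁻¹ * g') k * w k
      refine Fintype.sum_equiv ⟨fun k : G => x⁻¹ * k, fun k => x * k,
        fun k => by simp, fun k => by simp⟩ _ _ ?_
      intro k
      show (f (g' * k⁻¹) : ℂ) * w (x⁻¹ * k) = (f ((x⁻¹ * g') * (x⁻¹ * k)⁻¹) : ℂ) * w (x⁻¹ * k)
      have h1 : (x⁻¹ * g') * (x⁻¹ * k)⁻¹ = x⁻¹ * (g' * k⁻¹) * (x⁻¹)⁻¹ := by group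
      rw [h1, hclass]
    have hLE : ∀ x : G, ∀ w ∈ E, L x w ∈ E := by
      intro x w hw
      rw [hmemE] at hw ⊢
      rw [hTL, hw, _root_.map_smul]
    let ρ : G → Module.End ℂ E := fun x => (L x).restrict (hLE x)
    have hρcoe : ∀ (x : G) (w : E), ((ρ x w : G → ℂ)) = L x (w : G → ℂ) := fun x w => rfl
    have hρmul : ∀ x y : G, ρ x * ρ y = ρ (x * y) := by
      intro x y
      refine LinearMap.ext fun w => Subtype.ext ?_
      show (L x) ((L y) (w : G → ℂ)) = L (x*y) (w : G → ℂ)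
      rw [← hLmul]
      rfl
    have hρ1 : ρ (1 : G) = 1 := by
      refine LinearMap.ext fun w => Subtype.ext ?_
      show L (1:G) (w : G → ℂ) = (w : G → ℂ)
      rw [hL1]
      rfl
    have hρpow : ∀ (x : G) (k : ℕ), ρ x ^ k = ρ (x ^ k) := by
      intro x k
      induction k with
      | zero => rw [pow_zero, pow_zero, hρ1]
      | succ k ih => rw [pow_succ, pow_succ, ih, hρmul]
    have hρ12 : ∀ x : G, ρ x ^ 12 = 1 := fun x => by rw [hρpow, h12, hρ1]
    have hconv : ∀ w : G → ℂ, (∑ x : G, (f x : ℂ) • L x w) = Mc.mulVec w := by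
      intro w
      funext g'
      have hLHS : (∑ x : G, (f x : ℂ) • L x w) g' = ∑ x : G, (f x : ℂ) * w (x⁻¹ * g') := by
        rw [Finset.sum_apply]
        rfl
      rw [hLHS]
      show _ = ∑ k : G, (f (g' * k⁻¹) : ℂ) * w k
      refine Fintype.sum_equiv ⟨fun x : G => x⁻¹ * g', fun k => g' * k⁻¹,
        fun x => by group, fun k => by group⟩ _ _ ?_
      intro x
      show (f x : ℂ) * w (x⁻¹ * g') = (f (g' * (x⁻¹ * g')⁻¹) : ℂ) * w (x⁻¹ * g')
      have h1 : g' * (x⁻¹ * g')⁻¹ = x := by group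
      rw [h1]
    have hEnd : (μ • (1 : Module.End ℂ E)) = ∑ x : G, (f x : ℂ) • ρ x := by
      refine LinearMap.ext fun w => Subtype.ext ?_
      have hwE : Mc.mulVec (w : G → ℂ) = μ • (w : G → ℂ) := (hmemE _).mp w.2
      calc ((μ • (1 : Module.End ℂ E)) w : G → ℂ) = μ • (w : G → ℂ) := rfl
        _ = Mc.mulVec (w : G → ℂ) := hwE.symm
        _ = ∑ x : G, (f x : ℂ) • L x (w : G → ℂ) := (hconv _).symm
        _ = (((∑ x : G, (f x : ℂ) • ρ x) w : E) : G → ℂ) := by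
            rw [LinearMap.sum_apply]
            rw [AddSubmonoidClass.coe_finset_sum]
            refine Finset.sum_congr rfl fun x _ => ?_
            rw [LinearMap.smul_apply, Submodule.coe_smul, hρcoe]
    set d := Module.finrank ℂ E with hd
    have htr1 : μ * d = ∑ x : G, (f x : ℂ) * LinearMap.trace ℂ E (ρ x) := by
      have h := congrArg (LinearMap.trace ℂ E) hEnd
      rw [_root_.map_smul, LinearMap.trace_one, _root_.map_sum] at h
      simp only [_root_.map_smul, smul_eq_mul] at h
      exact h
    have hsq : ∀ c : ℕ, c * c % 12 = 1 → ∀ x : G, (x ^ c) ^ c = x := by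
      intro c hcc x
      have h' : x ^ (c * c) = x := by
        conv_lhs => rw [← Nat.div_add_mod (c*c) 12]
        rw [pow_add, pow_mul, h12, one_pow, one_mul, hcc, pow_one]
      rw [← pow_mul, h']
    have hreindex : ∀ c : ℕ, Nat.Coprime c 12 → (∀ x : G, (x ^ c) ^ c = x) →
        ∑ x : G, (f x : ℂ) * LinearMap.trace ℂ E (ρ (x ^ c))
          = ∑ x : G, (f x : ℂ) * LinearMap.trace ℂ E (ρ x) := by
      intro c hc hcc
      calc ∑ x : G, (f x : ℂ) * LinearMap.trace ℂ E (ρ (x ^ c))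
          = ∑ x : G, (f (x ^ c) : ℂ) * LinearMap.trace ℂ E (ρ (x ^ c)) :=
            Finset.sum_congr rfl fun x _ => by rw [hfp c hc x]
        _ = ∑ x : G, (f x : ℂ) * LinearMap.trace ℂ E (ρ x) :=
            Fintype.sum_equiv ⟨fun x : G => x ^ c, fun x => x ^ c, hcc, hcc⟩ _ _ fun x => rfl
    have h4 : ∑ x : G, (f x : ℂ) * (LinearMap.trace ℂ E (ρ x) + LinearMap.trace ℂ E (ρ (x^5))
        + LinearMap.trace ℂ E (ρ (x^7)) + LinearMap.trace ℂ E (ρ (x^11))) = 4 * (μ * d) := by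
      simp only [mul_add, Finset.sum_add_distrib]
      rw [hreindex 5 (by norm_num) (hsq 5 (by norm_num)),
        hreindex 7 (by norm_num) (hsq 7 (by norm_num)),
        hreindex 11 (by norm_num) (hsq 11 (by norm_num)), ← htr1]
      ring
    have hterm : ∀ x : G, ∃ k : ℤ, LinearMap.trace ℂ E (ρ x) + LinearMap.trace ℂ E (ρ (x^5))
        + LinearMap.trace ℂ E (ρ (x^7)) + LinearMap.trace ℂ E (ρ (x^11)) = (k : ℂ) := by
      intro x
      obtain ⟨k, hk⟩ := Stmt2Aux.trace_q_int (ρ x) (hρ12 x)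
      refine ⟨k, ?_⟩
      rw [← hk, _root_.map_add, _root_.map_add, _root_.map_add, hρpow x 5, hρpow x 7, hρpow x 11]
    have hmem : (4 * (μ * (d:ℂ))) ∈ (Int.castRingHom ℂ).range := by
      rw [← h4]
      refine Subring.sum_mem _ fun x _ => ?_
      obtain ⟨k, hk⟩ := hterm x
      rw [hk]
      exact Subring.mul_mem _ ⟨f x, rfl⟩ ⟨k, rfl⟩
    obtain ⟨K, hK⟩ := RingHom.mem_range.mp hmem
    have hd0 : (d : ℂ) ≠ 0 := Nat.cast_ne_zero.mpr hdpos.ne'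
    have h4d : (4 * (d:ℂ)) ≠ 0 := mul_ne_zero (by norm_num) hd0
    set q : ℚ := (K : ℚ) / (4 * d) with hq
    have hμq : μ = (q : ℂ) := by
      have hKC : (K : ℂ) = 4 * (μ * d) := hK
      rw [hq]
      push_cast
      rw [eq_div_iff h4d]
      linear_combination -hKC
    have hint : IsIntegral ℤ μ := by
      refine ⟨(Matrix.of (fun g h : G => f (g * h⁻¹))).charpoly, Matrix.charpoly_monic _, ?_⟩
      have hmap : (Matrix.of (fun g h : G => f (g * h⁻¹))).map ⇑(Int.castRingHom ℂ) = Mc := by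
        ext i j
        simp [Matrix.map_apply, hMc]
      show Polynomial.eval₂ (algebraMap ℤ ℂ) μ (Matrix.of (fun g h : G => f (g * h⁻¹))).charpoly = 0
      rw [algebraMap_int_eq, ← Polynomial.eval_map, ← Matrix.charpoly_map, hmap, Stmt2Aux.eval_charpoly']
      exact hdet'
    have hqint : IsIntegral ℤ q := by
      have hinj : Function.Injective ((algebraMap ℚ ℂ).toIntAlgHom) := by
        rw [RingHom.toIntAlgHom_coe]
        exact (algebraMap ℚ ℂ).injective
      apply (isIntegral_algHom_iff _ hinj).mp
      have hco : ((algebraMap ℚ ℂ).toIntAlgHom q) = μ := by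
        rw [hμq]
        show (algebraMap ℚ ℂ) q = (q : ℂ)
        exact eq_ratCast _ q
      rw [hco]
      exact hint
    obtain ⟨k, hk⟩ := IsIntegrallyClosed.isIntegral_iff.mp hqint
    refine ⟨k, ?_⟩
    rw [hμq, ← hk]
    simp
end

section
/- If G is a finite group such that every normal Cayley graph on G is integral, then G is inverse semi-rational: for every g ∈ G, every generator of ⟨g⟩ is conjugate to g or to g⁻¹. -/
open Finset Polynomial

set_option linter.unusedSectionVars false

namespace Stmt6Aux

variable {G : Type*} [Group G] [Fintype G] [DecidableEq G]

section cayley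

variable (R : Type*) [CommRing R]

/-- Left translation permutation matrix. -/
def permMat (s : G) : Matrix G G R := Matrix.of fun a b => if a = s * b then 1 else 0

lemma permMat_mul (s t : G) : (permMat R s : Matrix G G R) * permMat R t = permMat R (s * t) := by
  ext a b
  simp only [permMat, Matrix.mul_apply, Matrix.of_apply]
  rw [Finset.sum_eq_single (t * b)]
  · simp [mul_assoc]
  · intro x _ hx
    simp [hx]
  · simp

lemma permMat_one : (permMat R (1 : G)) = 1 := by
  ext a b
  simp [permMat, Matrix.one_apply]

/-- The adjacency matrix of the Cayley graph of `S`. -/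
def cay (S : Finset G) : Matrix G G R := Matrix.of fun a b => if a * b⁻¹ ∈ S then 1 else 0

lemma cay_eq_sum (S : Finset G) : cay R S = ∑ s : {x // x ∈ S}, permMat R (s : G) := by
  ext a b
  rw [Matrix.sum_apply]
  have h1 : ∀ s : {x // x ∈ S}, (permMat R (s : G)) a b
      = if (s : G) = a * b⁻¹ then (1 : R) else 0 := by
    intro s
    simp only [permMat, Matrix.of_apply]
    congr 1
    simp only [eq_iff_iff]
    constructor
    · intro h; rw [h, mul_inv_cancel_right]
    · intro h; rw [h, inv_mul_cancel_right]
  simp_rw [h1]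
  rw [Finset.sum_coe_sort S (fun s => if s = a * b⁻¹ then (1 : R) else 0)]
  rw [Finset.sum_ite_eq' S (a * b⁻¹) (fun _ => (1 : R))]
  rfl

end cayley

section fprodsec

variable {M : Type*} [Monoid M]

/-- Ordered product of a `Fin`-indexed tuple in a (noncommutative) monoid. -/
def fprod {v : ℕ} (f : Fin v → M) : M := (List.ofFn f).prod

lemma fprod_succ {v : ℕ} (f : Fin (v + 1) → M) :
    fprod f = f 0 * fprod (fun i => f i.succ) := by
  simp [fprod, List.ofFn_succ, Function.comp]

lemma fprod_castSucc {v : ℕ} (f : Fin (v + 1) → M) :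
    fprod f = fprod (fun i => f i.castSucc) * f (Fin.last v) := by
  rw [fprod, List.ofFn_succ']
  simp [Function.comp, fprod]

lemma fprod_cons {v : ℕ} (a : M) (f : Fin v → M) :
    fprod (Fin.cons a f) = a * fprod f := by
  rw [fprod_succ]
  simp

lemma fprod_const {v : ℕ} (s : M) : fprod (fun _ : Fin v => s) = s ^ v := by
  simp [fprod, List.ofFn_const]

lemma fprod_hom {N : Type*} [Monoid N] {v : ℕ} (φ : M →* N) (f : Fin v → M) :
    φ (fprod f) = fprod (fun i => φ (f i)) := by
  rw [fprod, ← List.prod_hom _ φ, List.map_ofFn]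
  rfl

end fprodsec

section cayley2

variable (R : Type*) [CommRing R]

lemma cay_pow (S : Finset G) (v : ℕ) :
    (cay R S) ^ v = ∑ f : Fin v → {x // x ∈ S}, permMat R (fprod fun i => (f i : G)) := by
  induction v with
  | zero =>
    rw [pow_zero]
    rw [Finset.sum_congr rfl (fun f _ => by
      rw [show (fprod fun i : Fin 0 => ((f i : G))) = 1 from rfl, permMat_one])]
    rw [Finset.sum_const]
    simp
  | succ v ih =>
    rw [pow_succ', ih, cay_eq_sum, Finset.sum_mul_sum]
    rw [← Fintype.sum_prod_type']
    apply Fintype.sum_equiv (Fin.consEquiv (fun _ : Fin (v+1) => ({x // x ∈ S} : Type _)))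
    intro ⟨a, f⟩
    rw [permMat_mul]
    congr 1
    have hc : (fun i => (((Fin.consEquiv fun _ : Fin (v+1) => ({x // x ∈ S} : Type _)) (a, f)) i : G))
        = Fin.cons (a : G) (fun i => (f i : G)) := by
      funext i
      refine Fin.cases ?_ ?_ i <;> simp [Fin.consEquiv]
    rw [hc, fprod_cons]

lemma cay_pow_apply (S : Finset G) (v : ℕ) (a b : G) :
    ((cay R S) ^ v) a b
      = ((Finset.univ.filter fun f : Fin v → {x // x ∈ S} =>
          (fprod fun i => (f i : G)) = a * b⁻¹).card : R) := by
  rw [cay_pow, Matrix.sum_apply]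
  have h1 : ∀ f : Fin v → {x // x ∈ S}, (permMat R (fprod fun i => (f i : G))) a b
      = if (fprod fun i => (f i : G)) = a * b⁻¹ then (1 : R) else 0 := by
    intro f
    simp only [permMat, Matrix.of_apply]
    congr 1
    simp only [eq_iff_iff]
    constructor
    · intro h; rw [h, mul_inv_cancel_right]
    · intro h; rw [h, inv_mul_cancel_right]
  simp_rw [h1]
  rw [Finset.sum_boole]

end cayley2

section rotation

variable {G : Type*} [Group G]

open Fin.NatCast

lemma fprod_shift_one (m : ℕ) (h : Fin (m + 1) → G) :
    fprod (fun i => h (i + 1)) = (h 0)⁻¹ * fprod h * h 0 := by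
  rw [fprod_castSucc (fun i => h (i + 1))]
  rw [fprod_succ h]
  have h1 : Fin.last m + 1 = 0 := Fin.last_add_one m
  have h2 : ∀ i : Fin m, i.castSucc + 1 = i.succ := fun i => Fin.coeSucc_eq_succ
  simp_rw [h1, h2]
  group

lemma fprod_shift (m : ℕ) (c : ℕ) (h : Fin (m + 1) → G) :
    ∃ u : G, fprod (fun i => h (i + (c : Fin (m + 1)))) = u * fprod h * u⁻¹ := by
  induction c generalizing h with
  | zero => exact ⟨1, by simp⟩
  | succ c ih =>
    obtain ⟨u, hu⟩ := ih (fun j => h (j + 1))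
    refine ⟨u * (h 0)⁻¹, ?_⟩
    have hidx : ∀ i : Fin (m + 1), i + ((c : ℕ) + 1 : ℕ) = (i + (c : Fin (m+1))) + 1 := by
      intro i
      push_cast
      rw [add_assoc]
    simp_rw [hidx]
    have : (fun i => h (i + (c : Fin (m+1)) + 1)) = (fun i => (fun j => h (j + 1)) (i + (c : Fin (m+1)))) := by
      funext i; rfl
    rw [this, hu, fprod_shift_one m h]
    group

variable [Fintype G] [DecidableEq G]

lemma rotation_count (m : ℕ) (hp : Nat.Prime (m + 1)) (T : Finset G) (P : G → Prop)
    [DecidablePred P] (hP : ∀ u z, P z → P (u * z * u⁻¹)) :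
    (Finset.univ.filter fun f : Fin (m+1) → {x // x ∈ T} =>
        P (fprod fun i => (f i : G))).card
      ≡ (T.filter fun s => P (s ^ (m + 1))).card [MOD (m + 1)] := by
  classical
  haveI : Fact (Nat.Prime (m+1)) := ⟨hp⟩
  set α := {f : Fin (m+1) → {x // x ∈ T} // P (fprod fun i => (f i : G))} with hα
  have key : ∀ (c : Fin (m+1)) (f : Fin (m+1) → {x // x ∈ T}),
      P (fprod fun i => (f i : G)) → P (fprod fun i => (f (i + c) : G)) := by
    intro c f hf
    obtain ⟨u, hu⟩ := fprod_shift m c.val (fun i => (f i : G))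
    have hc : (c.val : Fin (m+1)) = c := Fin.cast_val_eq_self c
    rw [hc] at hu
    rw [show (fun i => (f (i + c) : G)) = (fun i => ((fun j => (f j : G)) (i + c))) from rfl]
    rw [hu]
    exact hP u _ hf
  letI : SMul (Multiplicative (Fin (m+1))) α :=
    ⟨fun c f => ⟨fun i => f.1 (i + c.toAdd), key c.toAdd f.1 f.2⟩⟩
  letI : MulAction (Multiplicative (Fin (m+1))) α :=
    { one_smul := by
        intro f
        apply Subtype.ext
        funext i
        show f.1 (i + (Multiplicative.toAdd 1)) = f.1 i
        rw [toAdd_one, add_zero]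
      mul_smul := by
        intro c d f
        apply Subtype.ext
        funext i
        show f.1 (i + Multiplicative.toAdd (c * d)) = f.1 (i + Multiplicative.toAdd c + Multiplicative.toAdd d)
        rw [toAdd_mul, ← add_assoc] }
  have hgrp : IsPGroup (m+1) (Multiplicative (Fin (m+1))) := by
    apply IsPGroup.of_card (n := 1)
    rw [pow_one, Nat.card_eq_fintype_card]
    simp
  have hmod := IsPGroup.card_modEq_card_fixedPoints (p := m+1) hgrp α
  -- fixed points are constant tuples
  have hconst : ∀ f : α, (f ∈ MulAction.fixedPoints (Multiplicative (Fin (m+1))) α) →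
      ∀ i, f.1 i = f.1 0 := by
    intro f hf i
    have h1 := hf (Multiplicative.ofAdd i)
    have h2 : f.1 (0 + i) = f.1 0 := congrFun (congrArg Subtype.val h1) 0
    rw [zero_add] at h2
    exact h2
  have e : MulAction.fixedPoints (Multiplicative (Fin (m+1))) α ≃
      {s : {x // x ∈ T} // P ((s : G) ^ (m+1))} :=
    { toFun := fun f => ⟨f.1.1 0, by
        have hc := hconst f.1 f.2
        have hpr : (fprod fun i => (f.1.1 i : G)) = ((f.1.1 0 : G)) ^ (m+1) := by
          rw [show (fun i => (f.1.1 i : G)) = (fun _ : Fin (m+1) => (f.1.1 0 : G)) from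
            funext fun i => by rw [hc i]]
          exact fprod_const _
        rw [← hpr]
        exact f.1.2⟩
      invFun := fun s => ⟨⟨fun _ => s.1, by rw [fprod_const]; exact s.2⟩, by
        intro c
        apply Subtype.ext
        funext i
        rfl⟩
      left_inv := fun f => by
        apply Subtype.ext
        apply Subtype.ext
        funext i
        exact (hconst f.1 f.2 i).symm
      right_inv := fun s => rfl }
  have c1 : Nat.card α = (Finset.univ.filter fun f : Fin (m+1) → {x // x ∈ T} =>
      P (fprod fun i => (f i : G))).card := by
    rw [Nat.card_eq_fintype_card, Fintype.card_subtype]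
  have c2 : Nat.card (MulAction.fixedPoints (Multiplicative (Fin (m+1))) α)
      = (T.filter fun s => P (s ^ (m+1))).card := by
    rw [Nat.card_congr e, Nat.card_eq_fintype_card, Fintype.card_subtype]
    apply Finset.card_bij (fun (s : {x // x ∈ T}) _ => (s : G))
    · intro s hs
      rw [Finset.mem_filter] at hs ⊢
      exact ⟨s.2, hs.2⟩
    · intro s _ t _ h
      exact Subtype.ext h
    · intro z hz
      rw [Finset.mem_filter] at hz
      exact ⟨⟨z, hz.1⟩, Finset.mem_filter.mpr ⟨Finset.mem_univ _, hz.2⟩, rfl⟩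
  rw [c1, c2] at hmod
  exact hmod

end rotation

section partA

variable {G : Type*} [Group G] [Fintype G] [DecidableEq G]

lemma partA (S : Finset G) (hconj : ∀ u s, s ∈ S → u * s * u⁻¹ ∈ S)
    (m k : ℕ) (hp : Nat.Prime (m + 1)) (hcard : Fintype.card G < m + 1)
    (hpk : ∀ s ∈ S, s ^ (m + 1) = s ^ k)
    (hinj : ∀ s ∈ S, ∀ t ∈ S, s ^ k = t ^ k → s = t) :
    (cay (ZMod (m+1)) S) ^ (m+1) = cay (ZMod (m+1)) (S.image (· ^ k)) := by
  classical
  haveI : Fact (Nat.Prime (m+1)) := ⟨hp⟩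
  ext a b
  rw [cay_pow_apply]
  set y := a * b⁻¹ with hy
  set S' := S.image (· ^ k) with hS'
  have hS'conj : ∀ u z, z ∈ S' → u * z * u⁻¹ ∈ S' := by
    intro u z hz
    obtain ⟨s, hs, rfl⟩ := Finset.mem_image.mp hz
    refine Finset.mem_image.mpr ⟨u * s * u⁻¹, hconj u s hs, ?_⟩
    show (u * s * u⁻¹) ^ k = u * s ^ k * u⁻¹
    rw [← MulAut.conj_apply, ← map_pow, MulAut.conj_apply]
  set N : G → ℕ := fun z => (Finset.univ.filter fun f : Fin (m+1) → {x // x ∈ S} =>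
      (fprod fun i => (f i : G)) = z).card with hN
  have hNconj : ∀ u z, N (u * z * u⁻¹) = N z := by
    intro u z
    apply Finset.card_bij' (fun f _ => fun i => (⟨u⁻¹ * (f i : G) * u⁻¹⁻¹, hconj u⁻¹ _ (f i).2⟩ : {x // x ∈ S}))
      (fun f _ => fun i => (⟨u * (f i : G) * u⁻¹, hconj u _ (f i).2⟩ : {x // x ∈ S}))
    · intro f hf
      rw [Finset.mem_filter] at hf ⊢
      refine ⟨Finset.mem_univ _, ?_⟩
      have : (fun i => ((⟨u⁻¹ * (f i : G) * u⁻¹⁻¹, hconj u⁻¹ _ (f i).2⟩ : {x // x ∈ S}) : G))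
          = fun i => (MulAut.conj u⁻¹).toMonoidHom ((f i : G)) := by
        funext i; rfl
      rw [this, ← fprod_hom (MulAut.conj u⁻¹).toMonoidHom]
      show (MulAut.conj u⁻¹) (fprod fun i => (f i : G)) = z
      rw [hf.2, MulAut.conj_apply]
      group
    · intro f hf
      rw [Finset.mem_filter] at hf ⊢
      refine ⟨Finset.mem_univ _, ?_⟩
      have : (fun i => ((⟨u * (f i : G) * u⁻¹, hconj u _ (f i).2⟩ : {x // x ∈ S}) : G))
          = fun i => (MulAut.conj u).toMonoidHom ((f i : G)) := by
        funext i; rfl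
      rw [this, ← fprod_hom (MulAut.conj u).toMonoidHom]
      show (MulAut.conj u) (fprod fun i => (f i : G)) = u * z * u⁻¹
      rw [hf.2, MulAut.conj_apply]
    · intro f _
      funext i
      apply Subtype.ext
      show u * (u⁻¹ * (f i : G) * u⁻¹⁻¹) * u⁻¹ = (f i : G)
      group
    · intro f _
      funext i
      apply Subtype.ext
      show u⁻¹ * (u * (f i : G) * u⁻¹) * u⁻¹⁻¹ = (f i : G)
      group
  have hNclass : ∀ z, IsConj y z → N y = N z := by
    intro z hz
    obtain ⟨u, hu⟩ := isConj_iff.mp hz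
    rw [← hu, hNconj]
  set Cy := Finset.univ.filter fun z => IsConj y z with hCy
  have hyCy : y ∈ Cy := Finset.mem_filter.mpr ⟨Finset.mem_univ y, IsConj.refl y⟩
  have hCpos : 0 < Cy.card := Finset.card_pos.mpr ⟨y, hyCy⟩
  have hClt : Cy.card < m + 1 :=
    lt_of_le_of_lt (le_trans (Finset.card_filter_le _ _) (le_of_eq Finset.card_univ)) hcard
  have hfib := Finset.card_eq_sum_card_fiberwise
      (f := fun f : Fin (m+1) → {x // x ∈ S} => fprod fun i => (f i : G))
      (s := Finset.univ.filter fun f : Fin (m+1) → {x // x ∈ S} =>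
        IsConj y (fprod fun i => (f i : G)))
      (t := Cy)
      (fun f hf => Finset.mem_filter.mpr ⟨Finset.mem_univ _, (Finset.mem_filter.mp hf).2⟩)
  have h2 : (Finset.univ.filter fun f : Fin (m+1) → {x // x ∈ S} =>
      IsConj y (fprod fun i => (f i : G))).card = ∑ z ∈ Cy, N z := by
    rw [hfib]
    apply Finset.sum_congr rfl
    intro z hz
    rw [Finset.filter_filter]
    congr 1
    ext f
    simp only [Finset.mem_filter, Finset.mem_univ, true_and, and_iff_right_iff_imp]
    intro hf
    rw [hf]
    exact (Finset.mem_filter.mp hz).2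
  have h3 := rotation_count m hp S (fun z => IsConj y z)
    (fun u z hz => hz.trans (isConj_iff.mpr ⟨u, rfl⟩))
  have h4 : (S.filter fun s => IsConj y (s ^ (m+1))).card
      = (S.filter fun s => IsConj y (s ^ k)).card := by
    apply congrArg
    apply Finset.filter_congr
    intro s hs
    rw [hpk s hs]
  have h5 : (S.filter fun s => IsConj y (s ^ k)).card = (Cy.filter fun z => z ∈ S').card := by
    apply Finset.card_bij (fun s _ => s ^ k)
    · intro s hs
      obtain ⟨hsS, hsC⟩ := Finset.mem_filter.mp hs
      exact Finset.mem_filter.mpr ⟨Finset.mem_filter.mpr ⟨Finset.mem_univ _, hsC⟩,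
        Finset.mem_image_of_mem _ hsS⟩
    · intro s hs t ht h
      exact hinj s (Finset.mem_filter.mp hs).1 t (Finset.mem_filter.mp ht).1 h
    · intro z hz
      obtain ⟨hzC, hzS'⟩ := Finset.mem_filter.mp hz
      obtain ⟨s, hsS, rfl⟩ := Finset.mem_image.mp hzS'
      exact ⟨s, Finset.mem_filter.mpr ⟨hsS, (Finset.mem_filter.mp hzC).2⟩, rfl⟩
  have h6 : (Cy.filter fun z => z ∈ S').card = if y ∈ S' then Cy.card else 0 := by
    by_cases hy' : y ∈ S'
    · rw [if_pos hy']
      congr 1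
      apply Finset.filter_true_of_mem
      intro z hz
      obtain ⟨u, hu⟩ := isConj_iff.mp (Finset.mem_filter.mp hz).2
      rw [← hu]
      exact hS'conj u y hy'
    · rw [if_neg hy', Finset.card_eq_zero, Finset.filter_eq_empty_iff]
      intro z hz hzS'
      obtain ⟨u, hu⟩ := isConj_iff.mp (Finset.mem_filter.mp hz).2
      apply hy'
      have := hS'conj u⁻¹ z hzS'
      rw [← hu] at this
      have he : u⁻¹ * (u * y * u⁻¹) * u⁻¹⁻¹ = y := by group
      rwa [he] at this
  have main : (N y : ZMod (m+1)) * (Cy.card : ZMod (m+1))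
      = (if y ∈ S' then (1 : ZMod (m+1)) else 0) * (Cy.card : ZMod (m+1)) := by
    have l1 : (∑ z ∈ Cy, N z) = Cy.card * N y := by
      rw [Finset.sum_congr rfl (fun z hz => (hNclass z (Finset.mem_filter.mp hz).2).symm)]
      rw [Finset.sum_const, smul_eq_mul]
    have l3 : ((Finset.univ.filter fun f : Fin (m+1) → {x // x ∈ S} =>
        IsConj y (fprod fun i => (f i : G))).card : ZMod (m+1))
        = ((S.filter fun s => IsConj y (s ^ (m+1))).card : ZMod (m+1)) :=
      (ZMod.natCast_eq_natCast_iff _ _ _).mpr h3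
    calc (N y : ZMod (m+1)) * (Cy.card : ZMod (m+1))
        = ((Cy.card * N y : ℕ) : ZMod (m+1)) := by push_cast; ring
      _ = ((∑ z ∈ Cy, N z : ℕ) : ZMod (m+1)) := by rw [l1]
      _ = ((Finset.univ.filter fun f : Fin (m+1) → {x // x ∈ S} =>
            IsConj y (fprod fun i => (f i : G))).card : ZMod (m+1)) := by rw [h2]
      _ = ((S.filter fun s => IsConj y (s ^ (m+1))).card : ZMod (m+1)) := l3
      _ = (((Cy.filter fun z => z ∈ S').card : ℕ) : ZMod (m+1)) := by rw [h4, h5]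
      _ = (if y ∈ S' then (1 : ZMod (m+1)) else 0) * (Cy.card : ZMod (m+1)) := by
          rw [h6]
          split_ifs
          · rw [one_mul]
          · rw [zero_mul, Nat.cast_zero]
  have hCne : ((Cy.card : ℕ) : ZMod (m+1)) ≠ 0 := by
    rw [Ne, ZMod.natCast_eq_zero_iff]
    intro hdvd
    exact absurd (Nat.le_of_dvd hCpos hdvd) (not_le.mpr hClt)
  have hfin := mul_right_cancel₀ hCne main
  rw [hfin]
  rfl

end partA

section partB2

variable {n : Type*} [Fintype n] [DecidableEq n]

lemma partB2 (p : ℕ) (hp : Nat.Prime p) (AZ : Matrix n n ℤ) (L : Finset ℤ)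
    (hA : Polynomial.aeval AZ (∏ l ∈ L, (Polynomial.X - Polynomial.C l)) = 0)
    (hbig : ∀ l ∈ L, ∀ l' ∈ L, l ≠ l' → ¬((p : ℤ) ∣ l - l')) :
    (AZ.map (Int.cast : ℤ → ZMod p)) ^ p = AZ.map (Int.cast : ℤ → ZMod p) := by
  classical
  haveI : Fact (Nat.Prime p) := ⟨hp⟩
  set P : ℤ[X] := ∏ l ∈ L, (X - C l) with hP
  set Abar := AZ.map (Int.cast : ℤ → ZMod p) with hAbar
  -- transfer annihilation mod p
  let ψ : Matrix n n ℤ →ₐ[ℤ] Matrix n n (ZMod p) :=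
    AlgHom.mapMatrix (Int.castRingHom (ZMod p)).toIntAlgHom
  have h0 : Polynomial.aeval Abar P = 0 := by
    have e1 : Polynomial.aeval (ψ AZ) P = ψ (Polynomial.aeval AZ P) :=
      Polynomial.aeval_algHom_apply ψ AZ P
    have e2 : ψ AZ = Abar := rfl
    rw [e2] at e1
    rw [e1, hA, map_zero]
  -- the mapped polynomial divides X^p - X
  have hmap : P.map (Int.castRingHom (ZMod p)) = ∏ l ∈ L, (X - C ((l : ℤ) : ZMod p)) := by
    rw [hP, Polynomial.map_prod]
    apply Finset.prod_congr rfl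
    intro l _
    rw [Polynomial.map_sub, Polynomial.map_X, Polynomial.map_C]
    rfl
  have hinj : ∀ l ∈ L, ∀ l' ∈ L, ((l : ℤ) : ZMod p) = ((l' : ℤ) : ZMod p) → l = l' := by
    intro l hl l' hl' h
    by_contra hne
    apply hbig l hl l' hl' hne
    rw [← ZMod.intCast_zmod_eq_zero_iff_dvd]
    push_cast
    rw [h]
    ring
  have hdvd : (∏ l ∈ L, (X - C ((l : ℤ) : ZMod p))) ∣ (X ^ p - X : (ZMod p)[X]) := by
    have e3 : ∏ l ∈ L, (X - C ((l : ℤ) : ZMod p))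
        = ∏ c ∈ L.image (fun l : ℤ => ((l : ℤ) : ZMod p)), (X - C c) :=
      (Finset.prod_image (f := fun c : ZMod p => (X - C c)) (g := fun l : ℤ => ((l : ℤ) : ZMod p)) hinj).symm
    rw [e3]
    have e4 : (∏ c ∈ (Finset.univ : Finset (ZMod p)), (X - C c)) ∣ (X ^ p - X : (ZMod p)[X]) := by
      have hr := FiniteField.roots_X_pow_card_sub_X (ZMod p)
      have hd := Polynomial.prod_multiset_X_sub_C_dvd (X ^ p - X : (ZMod p)[X])
      rw [show Fintype.card (ZMod p) = p from ZMod.card p] at hr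
      rw [hr] at hd
      have e5 : (Multiset.map (fun a => X - C a) (Finset.univ.val : Multiset (ZMod p))).prod
          = ∏ c ∈ (Finset.univ : Finset (ZMod p)), (X - C c) := rfl
      rw [e5] at hd
      exact hd
    exact dvd_trans (Finset.prod_dvd_prod_of_subset _ _ _ (Finset.subset_univ _)) e4
  obtain ⟨q, hq⟩ := hdvd
  have hPe : Polynomial.aeval Abar (P.map (Int.castRingHom (ZMod p))) = 0 := by
    rw [show Int.castRingHom (ZMod p) = algebraMap ℤ (ZMod p) from rfl]
    rw [Polynomial.aeval_map_algebraMap]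
    exact h0
  have hfin : Abar ^ p - Abar = 0 := by
    have : Abar ^ p - Abar = Polynomial.aeval Abar (X ^ p - X : (ZMod p)[X]) := by
      rw [map_sub, Polynomial.aeval_X_pow, Polynomial.aeval_X]
    rw [this, hq, map_mul, ← hmap, hPe, zero_mul]
  rw [sub_eq_zero] at hfin
  exact hfin

end partB2

section partB1

variable {G : Type*} [Group G] [Fintype G] [DecidableEq G]

lemma exists_annihilating (S : Finset G) (hinv : ∀ s ∈ S, s⁻¹ ∈ S)
    (hspec : ∀ μ ∈ spectrum ℂ ((cay ℤ S).map (Int.cast : ℤ → ℂ)), ∃ z : ℤ, μ = (z : ℂ)) :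
    ∃ L : Finset ℤ, Polynomial.aeval (cay ℤ S) (∏ l ∈ L, (X - C l)) = 0 := by
  classical
  set Ac := (cay ℤ S).map (Int.cast : ℤ → ℂ) with hAc
  have hent : ∀ a b, Ac a b = if a * b⁻¹ ∈ S then (1 : ℂ) else 0 := by
    intro a b
    rw [hAc, Matrix.map_apply]
    show ((if a * b⁻¹ ∈ S then (1 : ℤ) else 0 : ℤ) : ℂ) = _
    split_ifs <;> simp
  have hherm : Ac.IsHermitian := by
    apply Matrix.IsHermitian.ext
    intro a b
    rw [hent, hent]
    have hmem : b * a⁻¹ ∈ S ↔ a * b⁻¹ ∈ S := by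
      constructor
      · intro h
        have := hinv _ h
        rwa [mul_inv_rev, inv_inv] at this
      · intro h
        have := hinv _ h
        rwa [mul_inv_rev, inv_inv] at this
    by_cases h : a * b⁻¹ ∈ S
    · rw [if_pos h, if_pos (hmem.mpr h), star_one]
    · rw [if_neg h, if_neg (fun hc => h (hmem.mp hc)), star_zero]
  have hfin : (spectrum ℂ Ac).Finite := Matrix.finite_spectrum Ac
  set intOf : ℂ → ℤ := fun μ => if h : ∃ z : ℤ, μ = (z : ℂ) then h.choose else 0 with hintOf
  set L : Finset ℤ := hfin.toFinset.image intOf with hL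
  refine ⟨L, ?_⟩
  set Pc : ℂ[X] := ∏ l ∈ L, (X - C (l : ℂ)) with hPc
  set Bc := Polynomial.aeval Ac Pc with hBc
  -- Bc is Hermitian
  have hBherm : ∀ t : Finset ℤ, (Polynomial.aeval Ac (∏ l ∈ t, (X - C ((l : ℤ) : ℂ)))).IsHermitian := by
    intro t
    induction t using Finset.induction_on with
    | empty =>
      rw [Finset.prod_empty, map_one]
      exact Matrix.isHermitian_one
    | insert c t' hnotmem ih =>
      rw [Finset.prod_insert hnotmem, map_mul]
      have h1 : (Polynomial.aeval Ac (X - C ((c : ℤ) : ℂ))) = Ac - (algebraMap ℂ _ ((c : ℤ) : ℂ)) := by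
        rw [map_sub, Polynomial.aeval_X, Polynomial.aeval_C]
      have hherm1 : (Polynomial.aeval Ac (X - C ((c : ℤ) : ℂ))).IsHermitian := by
        rw [h1]
        apply Matrix.IsHermitian.sub hherm
        show ((Matrix.scalar G) ((c : ℤ) : ℂ)).IsHermitian
        rw [Matrix.scalar_apply]
        apply Matrix.isHermitian_diagonal_iff.mpr
        intro i
        show IsSelfAdjoint (((c : ℤ) : ℂ))
        exact IsSelfAdjoint.intCast c
      have hcomm : Commute (Polynomial.aeval Ac (X - C ((c : ℤ) : ℂ)))
          (Polynomial.aeval Ac (∏ l ∈ t', (X - C ((l : ℤ) : ℂ)))) := by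
        unfold Commute SemiconjBy
        rw [← map_mul, ← map_mul, mul_comm ((X : ℂ[X]) - C ((c : ℤ) : ℂ))]
      exact (Matrix.IsHermitian.commute_iff hherm1 ih).mp hcomm

  have hBh : Bc.IsHermitian := hBherm L
  -- spectrum of Bc ⊆ {0}
  have hnon : (spectrum ℂ Ac).Nonempty :=
    spectrum.nonempty_of_isAlgClosed_of_finiteDimensional ℂ Ac
  have hzero : ∀ w ∈ spectrum ℂ Bc, w = 0 := by
    have hspecmap := spectrum.map_polynomial_aeval_of_nonempty Ac Pc hnon
    rw [hBc, hspecmap]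
    rintro _ ⟨μ, hμ, rfl⟩
    have hex := hspec μ hμ
    have hμeq : μ = ((intOf μ : ℤ) : ℂ) := by
      rw [hintOf]
      dsimp only
      rw [dif_pos hex]
      exact hex.choose_spec
    have hmem : intOf μ ∈ L := Finset.mem_image_of_mem _ (hfin.mem_toFinset.mpr hμ)
    show Polynomial.eval μ Pc = 0
    rw [hPc, Polynomial.eval_prod]
    apply Finset.prod_eq_zero hmem
    rw [Polynomial.eval_sub, Polynomial.eval_X, Polynomial.eval_C, sub_eq_zero]
    exact hμeq
  -- eigenvalues of Bc are zero, so Bc = 0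
  have heig : ∀ i, hBh.eigenvalues i = 0 := by
    intro i
    have h1 := hBh.eigenvalues_mem_spectrum_real i
    have h2 : ((hBh.eigenvalues i : ℝ) : ℂ) ∈ spectrum ℂ Bc := by
      have h3 := (spectrum.algebraMap_mem_iff (R := ℝ) (S := ℂ)
        (A := Matrix G G ℂ) (a := Bc) (r := hBh.eigenvalues i)).mpr h1
      rwa [show algebraMap ℝ ℂ (hBh.eigenvalues i) = ((hBh.eigenvalues i : ℝ) : ℂ) from rfl] at h3
    have := hzero _ h2
    exact_mod_cast this
  have hBc0 : Bc = 0 := by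
    have hst := hBh.spectral_theorem
    have hdiag : (Matrix.diagonal (RCLike.ofReal ∘ hBh.eigenvalues) : Matrix G G ℂ) = 0 := by
      rw [show (RCLike.ofReal ∘ hBh.eigenvalues : G → ℂ) = fun _ => 0 from
        funext fun i => by simp [heig i]]
      exact Matrix.diagonal_zero
    rw [hdiag, map_zero] at hst
    exact hst
  -- transfer to ℤ
  let ψ : Matrix G G ℤ →ₐ[ℤ] Matrix G G ℂ := AlgHom.mapMatrix (Int.castRingHom ℂ).toIntAlgHom
  have htrans : ψ (Polynomial.aeval (cay ℤ S) (∏ l ∈ L, (X - C l))) = 0 := by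
    rw [← Polynomial.aeval_algHom_apply ψ (cay ℤ S) (∏ l ∈ L, (X - C l))]
    have e2 : ψ (cay ℤ S) = Ac := rfl
    rw [e2]
    have e3 : Polynomial.aeval Ac (∏ l ∈ L, (X - C l) : ℤ[X]) = Polynomial.aeval Ac Pc := by
      rw [← Polynomial.aeval_map_algebraMap ℂ Ac (∏ l ∈ L, (X - C l) : ℤ[X])]
      congr 1
      rw [Polynomial.map_prod]
      apply Finset.prod_congr rfl
      intro l _
      rw [Polynomial.map_sub, Polynomial.map_X, Polynomial.map_C]
      rfl
    rw [e3, ← hBc, hBc0]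
  apply Matrix.ext
  intro a b
  have := congrFun (congrFun (congrArg (fun M : Matrix G G ℂ => (M : G → G → ℂ)) htrans) a) b
  show Polynomial.aeval (cay ℤ S) (∏ l ∈ L, (X - C l)) a b = (0 : Matrix G G ℤ) a b
  have hz : ((Polynomial.aeval (cay ℤ S) (∏ l ∈ L, (X - C l)) a b : ℤ) : ℂ) = 0 := this
  rw [show ((0 : Matrix G G ℤ) a b) = (0 : ℤ) from rfl]
  exact_mod_cast hz

end partB1

end Stmt6Aux

/-- If every normal Cayley graph on `G` is integral, then `G` is inverse semi-rational. -/
theorem stmt6 (G : Type*) [Group G] [Fintype G] [DecidableEq G]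
    (hNCI : ∀ S : Finset G, (1 : G) ∉ S → (∀ s ∈ S, s⁻¹ ∈ S) →
      (∀ g : G, ∀ s ∈ S, g * s * g⁻¹ ∈ S) →
      ∀ μ ∈ spectrum ℂ (Matrix.of fun g h : G => if g * h⁻¹ ∈ S then (1 : ℂ) else 0),
        ∃ k : ℤ, μ = (k : ℂ)) :
    ∀ g x : G, Subgroup.zpowers x = Subgroup.zpowers g → IsConj g x ∨ IsConj g⁻¹ x := by
  classical
  intro g x hzp
  by_cases hg1 : g = 1
  · left
    subst hg1
    have hx : x ∈ Subgroup.zpowers x := Subgroup.mem_zpowers x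
    rw [hzp, Subgroup.zpowers_one_eq_bot] at hx
    rw [Subgroup.mem_bot.mp hx]
  · set n := orderOf g with hn
    have hnpos : 0 < n := orderOf_pos g
    have hn1 : 1 < n := by
      rcases Nat.lt_or_ge 1 n with h | h
      · exact h
      · exfalso
        exact hg1 (orderOf_eq_one_iff.mp (le_antisymm h hnpos))
    have hxmem : x ∈ Subgroup.zpowers g := hzp ▸ Subgroup.mem_zpowers x
    obtain ⟨mz, hmz⟩ := Subgroup.mem_zpowers_iff.mp hxmem
    set k : ℕ := (mz % (n : ℤ)).toNat with hk
    have hk0 : g ^ k = x := by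
      have h1 : (0:ℤ) ≤ mz % (n : ℤ) := Int.emod_nonneg mz (by exact_mod_cast hnpos.ne')
      have h2 : g ^ (mz % (n:ℤ)) = g ^ mz := by
        conv_rhs => rw [← Int.emod_add_mul_ediv mz (n : ℤ)]
        rw [zpow_add, zpow_mul]
        have h3 : g ^ (n : ℤ) = 1 := by
          rw [zpow_natCast, hn, pow_orderOf_eq_one]
        rw [h3, one_zpow, mul_one]
      rw [← zpow_natCast g k, hk, Int.toNat_of_nonneg h1, h2, hmz]
    have hox : orderOf x = n := by
      rw [← Nat.card_zpowers, hzp, Nat.card_zpowers]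
    have hcop : Nat.gcd n k = 1 := by
      have h1 : orderOf (g ^ k) = n := by rw [hk0, hox]
      rw [orderOf_pow, ← hn] at h1
      rcases Nat.div_eq_self.mp h1 with h | h
      · omega
      · exact h
    set S : Finset G := Finset.univ.filter (fun s => IsConj g s ∨ IsConj g⁻¹ s) with hS
    have hgS : g ∈ S := Finset.mem_filter.mpr ⟨Finset.mem_univ _, Or.inl (IsConj.refl g)⟩
    have hconj1 : ∀ a : G, IsConj a 1 → a = 1 := by
      intro a ha
      obtain ⟨u, hu⟩ := isConj_iff.mp ha
      have : a = u⁻¹ * 1 * u := by rw [← hu]; group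
      rw [this]; group
    have h1S : (1 : G) ∉ S := by
      intro h
      rcases (Finset.mem_filter.mp h).2 with h' | h'
      · exact hg1 (hconj1 g h')
      · exact hg1 (inv_eq_one.mp (hconj1 g⁻¹ h'))
    have hSinv : ∀ s ∈ S, s⁻¹ ∈ S := by
      intro s hs
      rcases (Finset.mem_filter.mp hs).2 with h' | h'
      · obtain ⟨u, hu⟩ := isConj_iff.mp h'
        refine Finset.mem_filter.mpr ⟨Finset.mem_univ _, Or.inr (isConj_iff.mpr ⟨u, ?_⟩)⟩
        rw [← hu]; group
      · obtain ⟨u, hu⟩ := isConj_iff.mp h'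
        refine Finset.mem_filter.mpr ⟨Finset.mem_univ _, Or.inl (isConj_iff.mpr ⟨u, ?_⟩)⟩
        rw [← hu]; group
    have hSconj : ∀ u s, s ∈ S → u * s * u⁻¹ ∈ S := by
      intro u s hs
      rcases (Finset.mem_filter.mp hs).2 with h' | h'
      · exact Finset.mem_filter.mpr ⟨Finset.mem_univ _,
          Or.inl (h'.trans (isConj_iff.mpr ⟨u, rfl⟩))⟩
      · exact Finset.mem_filter.mpr ⟨Finset.mem_univ _,
          Or.inr (h'.trans (isConj_iff.mpr ⟨u, rfl⟩))⟩
    have hSord : ∀ s ∈ S, orderOf s = n := by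
      intro s hs
      rcases (Finset.mem_filter.mp hs).2 with h' | h'
      · obtain ⟨u, hu⟩ := isConj_iff.mp h'
        rw [← hu]
        rw [show u * g * u⁻¹ = (MulAut.conj u).toMonoidHom g from rfl]
        rw [orderOf_injective (MulAut.conj u).toMonoidHom (MulAut.conj u).injective g]
      · obtain ⟨u, hu⟩ := isConj_iff.mp h'
        rw [← hu]
        rw [show u * g⁻¹ * u⁻¹ = (MulAut.conj u).toMonoidHom g⁻¹ from rfl]
        rw [orderOf_injective (MulAut.conj u).toMonoidHom (MulAut.conj u).injective g⁻¹]
        rw [orderOf_inv]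
    have hmateq : (Matrix.of fun a b : G => if a * b⁻¹ ∈ S then (1:ℂ) else 0)
        = (Stmt6Aux.cay ℤ S).map (Int.cast : ℤ → ℂ) := by
      ext a b
      show (if a * b⁻¹ ∈ S then (1:ℂ) else 0) = ((if a * b⁻¹ ∈ S then (1:ℤ) else 0 : ℤ) : ℂ)
      split_ifs <;> simp
    have hspec := hNCI S h1S hSinv (fun u s hs => hSconj u s hs)
    rw [hmateq] at hspec
    obtain ⟨L, hL⟩ := Stmt6Aux.exists_annihilating S hSinv hspec
    haveI : NeZero n := ⟨hnpos.ne'⟩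
    have hcop' : Nat.Coprime k n := Nat.Coprime.symm hcop
    have hUnit : IsUnit ((k : ℕ) : ZMod n) := by
      rw [← ZMod.coe_unitOfCoprime k hcop']
      exact Units.isUnit _
    set B : ℕ := 2 * (L.sup Int.natAbs) + Fintype.card G + 2 with hB
    obtain ⟨p, hpB, hpp, hpk⟩ := Nat.forall_exists_prime_gt_and_eq_mod (q := n) hUnit B
    obtain ⟨m, rfl⟩ : ∃ m, p = m + 1 := ⟨p - 1, (Nat.succ_pred_eq_of_pos hpp.pos).symm⟩
    haveI : Fact (Nat.Prime (m+1)) := ⟨hpp⟩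
    have hpG : Fintype.card G < m + 1 := by omega
    have hpmod : (m + 1) ≡ k [MOD n] := (ZMod.natCast_eq_natCast_iff _ _ _).mp hpk
    have hpow : ∀ s ∈ S, s ^ (m+1) = s ^ k := by
      intro s hs
      apply pow_eq_pow_iff_modEq.mpr
      rw [hSord s hs]
      exact hpmod
    have hinj : ∀ s ∈ S, ∀ t ∈ S, s ^ k = t ^ k → s = t := by
      obtain ⟨l, -, hl⟩ := Nat.exists_mul_mod_eq_one_of_coprime hcop' hn1
      have h1 : ∀ w ∈ S, (w ^ k) ^ l = w := by
        intro w hw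
        rw [← pow_mul]
        have h2 : w ^ (k * l) = w ^ 1 := by
          apply pow_eq_pow_iff_modEq.mpr
          rw [hSord w hw]
          show k * l % n = 1 % n
          rw [hl, Nat.mod_eq_of_lt hn1]
        rw [h2, pow_one]
      intro s hs t ht h
      calc s = (s ^ k) ^ l := (h1 s hs).symm
        _ = (t ^ k) ^ l := by rw [h]
        _ = t := h1 t ht
    have hLbig : ∀ l ∈ L, ∀ l' ∈ L, l ≠ l' → ¬(((m+1 : ℕ) : ℤ) ∣ l - l') := by
      intro l hl l' hl' hne hdvd
      have h1 : l.natAbs ≤ L.sup Int.natAbs := Finset.le_sup hl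
      have h2 : l'.natAbs ≤ L.sup Int.natAbs := Finset.le_sup hl'
      have h3 : (l - l').natAbs ≤ 2 * (L.sup Int.natAbs) := by
        have := Int.natAbs_sub_le l l'
        omega
      have h4 : (m+1) ∣ (l - l').natAbs := by
        rwa [Int.natCast_dvd] at hdvd
      have h5 : (l - l').natAbs ≠ 0 := by
        intro h0
        exact hne (sub_eq_zero.mp (Int.natAbs_eq_zero.mp h0))
      have h6 := Nat.le_of_dvd (Nat.pos_of_ne_zero h5) h4
      omega
    have hA := Stmt6Aux.partA S (fun u s hs => hSconj u s hs) m k hpp hpG hpow hinj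
    have hB2 := Stmt6Aux.partB2 (m+1) hpp (Stmt6Aux.cay ℤ S) L hL hLbig
    have hcaymap : (Stmt6Aux.cay ℤ S).map (Int.cast : ℤ → ZMod (m+1))
        = Stmt6Aux.cay (ZMod (m+1)) S := by
      ext a b
      show ((if a * b⁻¹ ∈ S then (1:ℤ) else 0 : ℤ) : ZMod (m+1)) = (if a * b⁻¹ ∈ S then 1 else 0)
      split_ifs <;> simp
    rw [hcaymap] at hB2
    have hSS : Stmt6Aux.cay (ZMod (m+1)) (S.image (· ^ k)) = Stmt6Aux.cay (ZMod (m+1)) S :=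
      hA.symm.trans hB2
    have hxS' : x ∈ S.image (· ^ k) := Finset.mem_image.mpr ⟨g, hgS, hk0⟩
    have hxS : x ∈ S := by
      by_contra hxS
      have hent : (if x * (1:G)⁻¹ ∈ S.image (· ^ k) then (1 : ZMod (m+1)) else 0)
          = (if x * (1:G)⁻¹ ∈ S then (1 : ZMod (m+1)) else 0) := by
        show Stmt6Aux.cay (ZMod (m+1)) (S.image (· ^ k)) x 1 = Stmt6Aux.cay (ZMod (m+1)) S x 1
        rw [hSS]
      rw [inv_one, mul_one] at hent
      rw [if_pos hxS', if_neg hxS] at hent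
      exact one_ne_zero hent
    exact (Finset.mem_filter.mp hxS).2
end

section
/- Let G be a finite group such that χ(g) + χ(g⁻¹) ∈ ℤ for every irreducible character χ of G and every g ∈ G. Then every normal Cayley graph on G is integral. -/
open CategoryTheory

set_option linter.unusedSectionVars false
set_option maxHeartbeats 1000000

noncomputable section CayleyAux

open Module LinearMap

variable {G : Type} [Group G] [Fintype G] [DecidableEq G]

def subrep {V : Type} [AddCommGroup V] [Module ℂ V] (ρ : Representation ℂ G V)
    (p : Submodule ℂ V) (hp : ∀ g : G, ∀ x ∈ p, ρ g x ∈ p) : Representation ℂ G p where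
  toFun g := (ρ g).restrict (fun x hx => hp g x hx)
  map_one' := by ext x; simp [LinearMap.restrict_apply]
  map_mul' a b := by ext x; simp [LinearMap.restrict_apply, Module.End.mul_apply]

lemma subrep_apply {V : Type} [AddCommGroup V] [Module ℂ V] (ρ : Representation ℂ G V)
    (p : Submodule ℂ V) (hp : ∀ g : G, ∀ x ∈ p, ρ g x ∈ p) (g : G) (x : p) :
    (subrep ρ p hp g x : V) = ρ g (x : V) := rfl

lemma rho_inv_self {V : Type} [AddCommGroup V] [Module ℂ V] (ρ : Representation ℂ G V)
    (g : G) (x : V) : ρ g (ρ g⁻¹ x) = x := by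
  have : (ρ g * ρ g⁻¹) x = x := by rw [← map_mul, mul_inv_cancel, map_one, Module.End.one_apply]
  simpa [Module.End.mul_apply] using this

/-- Maschke: an invariant subspace has an invariant complement. -/
lemma exists_invariant_compl {V : Type} [AddCommGroup V] [Module ℂ V] [FiniteDimensional ℂ V]
    (ρ : Representation ℂ G V) (p : Submodule ℂ V) (hp : ∀ g : G, ∀ x ∈ p, ρ g x ∈ p) :
    ∃ q : Submodule ℂ V, (∀ g : G, ∀ x ∈ q, ρ g x ∈ q) ∧ IsCompl p q := by
  obtain ⟨q₀, hq₀⟩ := Submodule.exists_isCompl p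
  set π₀ : V →ₗ[ℂ] p := p.linearProjOfIsCompl q₀ hq₀ with hπ₀
  set c : ℂ := (Fintype.card G : ℂ)⁻¹ with hc
  have hcard : (Fintype.card G : ℂ) ≠ 0 := Nat.cast_ne_zero.mpr Fintype.card_ne_zero
  set Φ : V →ₗ[ℂ] p := c • ∑ g : G, (subrep ρ p hp g) ∘ₗ π₀ ∘ₗ ρ g⁻¹ with hΦ
  have hterm : ∀ (g : G) (x : V) (hx : x ∈ p), (subrep ρ p hp g) (π₀ (ρ g⁻¹ x)) = ⟨x, hx⟩ := by
    intro g x hx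
    have h1 : ρ g⁻¹ x ∈ p := hp g⁻¹ x hx
    have h2 : π₀ (ρ g⁻¹ x) = ⟨ρ g⁻¹ x, h1⟩ := Submodule.linearProjOfIsCompl_apply_left hq₀ ⟨ρ g⁻¹ x, h1⟩
    rw [h2]
    apply Subtype.ext
    rw [subrep_apply]
    exact rho_inv_self ρ g x
  have hΦp : ∀ x : V, ∀ hx : x ∈ p, Φ x = ⟨x, hx⟩ := by
    intro x hx
    rw [hΦ]
    simp only [LinearMap.smul_apply, LinearMap.sum_apply, LinearMap.comp_apply]
    rw [Finset.sum_congr rfl (fun g _ => hterm g x hx)]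
    rw [Finset.sum_const, Finset.card_univ, ← Nat.cast_smul_eq_nsmul ℂ, smul_smul, hc,
      inv_mul_cancel₀ hcard, one_smul]
  have hΦcomm : ∀ (g : G) (x : V), Φ (ρ g x) = subrep ρ p hp g (Φ x) := by
    intro g x
    have lhs : Φ (ρ g x) = c • ∑ h : G, (subrep ρ p hp h) (π₀ (ρ h⁻¹ (ρ g x))) := by
      rw [hΦ]; simp [LinearMap.sum_apply]
    have rhs : subrep ρ p hp g (Φ x)
        = c • ∑ h : G, (subrep ρ p hp g) ((subrep ρ p hp h) (π₀ (ρ h⁻¹ x))) := by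
      rw [hΦ]
      simp only [LinearMap.smul_apply, LinearMap.sum_apply, LinearMap.comp_apply, map_smul,
        map_sum]
    rw [lhs, rhs]
    congr 1
    refine (Fintype.sum_equiv (Equiv.mulLeft g)
      (fun h => (subrep ρ p hp g) ((subrep ρ p hp h) (π₀ (ρ h⁻¹ x))))
      (fun h => (subrep ρ p hp h) (π₀ (ρ h⁻¹ (ρ g x)))) ?_).symm
    intro h
    have h1 : ρ (g * h)⁻¹ (ρ g x) = ρ h⁻¹ x := by
      have e1 : ρ ((g * h)⁻¹) (ρ g x) = ρ ((g * h)⁻¹ * g) x := by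
        rw [map_mul]; rfl
      simpa [show (g * h)⁻¹ * g = h⁻¹ by group] using e1
    apply Subtype.ext
    simp only [subrep_apply, Equiv.coe_mulLeft]
    rw [h1, map_mul]
    rfl
  -- the invariant complement
  refine ⟨LinearMap.ker (p.subtype ∘ₗ Φ), ?_, ?_, ?_⟩
  · intro g x hx
    rw [LinearMap.mem_ker, LinearMap.comp_apply] at hx ⊢
    have hx0 : Φ x = 0 := by
      apply Subtype.ext
      simpa using hx
    rw [hΦcomm, hx0, map_zero, map_zero]
  · -- disjoint
    rw [disjoint_iff, Submodule.eq_bot_iff]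
    intro x hx
    obtain ⟨hxp, hxk⟩ := Submodule.mem_inf.mp hx
    rw [LinearMap.mem_ker, LinearMap.comp_apply, hΦp x hxp] at hxk
    simpa using hxk
  · -- codisjoint
    rw [codisjoint_iff, Submodule.eq_top_iff']
    intro x
    have h1 : ((Φ x : V)) ∈ p := (Φ x).2
    have h2 : x - (Φ x : V) ∈ LinearMap.ker (p.subtype ∘ₗ Φ) := by
      rw [LinearMap.mem_ker, LinearMap.comp_apply, map_sub, hΦp _ h1]
      simp
    exact Submodule.mem_sup.mpr ⟨(Φ x : V), h1, x - (Φ x : V), h2, by abel⟩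

lemma trace_split {V : Type} [AddCommGroup V] [Module ℂ V] [FiniteDimensional ℂ V]
    (f : V →ₗ[ℂ] V) (p q : Submodule ℂ V) (hpq : IsCompl p q)
    (hp : ∀ x ∈ p, f x ∈ p) (hq : ∀ x ∈ q, f x ∈ q) :
    LinearMap.trace ℂ V f
      = LinearMap.trace ℂ p (f.restrict hp) + LinearMap.trace ℂ q (f.restrict hq) := by
  have hint : DirectSum.IsInternal (fun b : Bool => cond b p q) := by
    rw [DirectSum.isInternal_submodule_iff_isCompl (fun b : Bool => cond b p q)
      (i := true) (j := false) (by simp) (by ext b; cases b <;> simp)]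
    exact hpq
  have hmt : ∀ b : Bool, Set.MapsTo f ((cond b p q : Submodule ℂ V) : Set V)
      ((cond b p q : Submodule ℂ V) : Set V) := by
    intro b; cases b
    · exact hq
    · exact hp
  rw [LinearMap.trace_eq_sum_trace_restrict hint hmt, Fintype.sum_bool]
  rfl

lemma fdRep_hom_comm {A B : FDRep ℂ G} (f : A ⟶ B) (g : G) (x : A) :
    f.hom (A.ρ g x) = B.ρ g (f.hom x) := LinearMap.ext_iff.1 (congrArg (fun φ => φ.hom.hom) (f.comm g)) x

lemma simple_of_invariant {V : Type} [AddCommGroup V] [Module ℂ V] [FiniteDimensional ℂ V]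
    [Nontrivial V] (ρ : Representation ℂ G V)
    (hmin : ∀ q : Submodule ℂ V, (∀ g : G, ∀ x ∈ q, ρ g x ∈ q) → q = ⊥ ∨ q = ⊤) :
    Simple (FDRep.of ρ) := by
  constructor
  intro Y f hf
  constructor
  · intro hiso h0
    obtain ⟨v, hv⟩ := exists_ne (0 : V)
    have h1 : inv f ≫ f = 𝟙 (FDRep.of ρ) := IsIso.inv_hom_id f
    have h2 := congrArg (fun φ : FDRep.of ρ ⟶ FDRep.of ρ => φ.hom v) h1
    simp only [h0, Limits.comp_zero] at h2
    simp at h2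
    exact hv h2.symm
  · intro hne
    set F : Y →ₗ[ℂ] V := (f.hom.hom.hom : Y →ₗ[ℂ] V) with hF
    have hcomm : ∀ (g : G) (x : Y), F (Y.ρ g x) = ρ g (F x) := fun g x => fdRep_hom_comm f g x
    -- injectivity
    have hKinv : ∀ g : G, ∀ x ∈ LinearMap.ker F, Y.ρ g x ∈ LinearMap.ker F := by
      intro g x hx
      rw [LinearMap.mem_ker] at hx ⊢
      rw [hcomm g x, hx, map_zero]
    let ι : FDRep.of (subrep Y.ρ (LinearMap.ker F) hKinv) ⟶ Y := ⟨FGModuleCat.ofHom (LinearMap.ker F).subtype, fun g => rfl⟩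
    have hmono : ι ≫ f = 0 ≫ f := by
      rw [Limits.zero_comp]
      ext x
      exact x.2
    have hι : ι = 0 := (cancel_mono f).mp hmono
    have hinj : Function.Injective F := by
      rw [← LinearMap.ker_eq_bot, Submodule.eq_bot_iff]
      intro x hx
      have := congrArg (fun φ : FDRep.of (subrep Y.ρ (LinearMap.ker F) hKinv) ⟶ Y => φ.hom.hom.hom ⟨x, hx⟩) hι
      simp [ι] at this
      exact this
    -- surjectivity
    have hRinv : ∀ g : G, ∀ y ∈ LinearMap.range F, ρ g y ∈ LinearMap.range F := by
      rintro g y ⟨x, rfl⟩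
      exact ⟨Y.ρ g x, hcomm g x⟩
    have hsurj : Function.Surjective F := by
      rcases hmin _ hRinv with h | h
      · exfalso
        apply hne
        ext x
        have : F x ∈ LinearMap.range F := ⟨x, rfl⟩
        rw [h] at this
        simpa using this
      · rw [← LinearMap.range_eq_top, h]
    set e : Y ≃ₗ[ℂ] V := LinearEquiv.ofBijective F ⟨hinj, hsurj⟩ with he
    have hefh : ∀ x : Y, e x = F x := fun x => rfl
    have hsymm : ∀ (g : G) (v : V), e.symm (ρ g v) = Y.ρ g (e.symm v) := by
      intro g v
      apply e.injective
      rw [e.apply_symm_apply, hefh, hcomm, ← hefh, e.apply_symm_apply]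
    refine ⟨⟨⟨FGModuleCat.ofHom (e.symm : V →ₗ[ℂ] Y), ?_⟩, ?_, ?_⟩⟩
    · intro g
      ext v
      exact hsymm g v
    · ext x
      exact e.symm_apply_apply x
    · ext v
      exact e.apply_symm_apply v


lemma char_of_eq (V : Type) [AddCommGroup V] [Module ℂ V] [FiniteDimensional ℂ V]
    (ρ : Representation ℂ G V) (g : G) :
    (FDRep.of ρ).character g = LinearMap.trace ℂ V (ρ g) := rfl

lemma trace_add_trace_inv_int
    (hchar : ∀ (V : FDRep ℂ G), Simple V → ∀ g : G,
      ∃ k : ℤ, V.character g + V.character g⁻¹ = (k : ℂ)) :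
    ∀ (n : ℕ) (V : Type) [AddCommGroup V] [Module ℂ V] [FiniteDimensional ℂ V],
      finrank ℂ V ≤ n → ∀ (ρ : Representation ℂ G V) (g : G),
      ∃ k : ℤ, LinearMap.trace ℂ V (ρ g) + LinearMap.trace ℂ V (ρ g⁻¹) = (k : ℂ) := by
  intro n
  induction n with
  | zero =>
    intro V _ _ _ hV ρ g
    have h0 : finrank ℂ V = 0 := le_antisymm hV (Nat.zero_le _)
    haveI : Subsingleton V := Module.finrank_zero_iff.mp h0
    refine ⟨0, ?_⟩
    rw [Subsingleton.elim (ρ g) 0, Subsingleton.elim (ρ g⁻¹) 0, map_zero]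
    simp
  | succ n ih =>
    intro V _ _ _ hV ρ g
    by_cases htriv : Subsingleton V
    · have h0 : finrank ℂ V = 0 := Module.finrank_zero_iff.mpr htriv
      refine ⟨0, ?_⟩
      rw [Subsingleton.elim (ρ g) 0, Subsingleton.elim (ρ g⁻¹) 0, map_zero]
      simp
    haveI : Nontrivial V := not_subsingleton_iff_nontrivial.mp htriv
    classical
    have hex : ∃ m : ℕ, ∃ p : Submodule ℂ V,
        (∀ g : G, ∀ x ∈ p, ρ g x ∈ p) ∧ p ≠ ⊥ ∧ finrank ℂ p = m :=
      ⟨finrank ℂ V, ⊤, fun g x _ => trivial, by simp, by rw [finrank_top]⟩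
    obtain ⟨p, hpinv, hpbot, hpm⟩ := Nat.find_spec hex
    haveI : Nontrivial p := Submodule.nontrivial_iff_ne_bot.mpr hpbot
    have hmin : ∀ q' : Submodule ℂ p, (∀ g : G, ∀ x ∈ q', subrep ρ p hpinv g x ∈ q') →
        q' = ⊥ ∨ q' = ⊤ := by
      intro q' hq'
      by_cases hb : q' = ⊥
      · exact Or.inl hb
      refine Or.inr ?_
      have hmap : ∀ g : G, ∀ x ∈ q'.map p.subtype, ρ g x ∈ q'.map p.subtype := by
        rintro g _ ⟨x, hx, rfl⟩
        exact ⟨subrep ρ p hpinv g x, hq' g x hx, rfl⟩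
      have hmb : q'.map p.subtype ≠ ⊥ := by
        intro h
        apply hb
        rw [Submodule.eq_bot_iff] at h ⊢
        intro x hx
        have hmem : (x : V) ∈ q'.map p.subtype := ⟨x, hx, rfl⟩
        have := h _ hmem
        exact Subtype.ext this
      have hge : Nat.find hex ≤ finrank ℂ (q'.map p.subtype) :=
        Nat.find_min' hex ⟨q'.map p.subtype, hmap, hmb, rfl⟩
      rw [Submodule.finrank_map_subtype_eq] at hge
      have heq : finrank ℂ q' = finrank ℂ p := le_antisymm (Submodule.finrank_le q')
        (le_trans (le_of_eq hpm) hge)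
      exact Submodule.eq_top_of_finrank_eq heq
    haveI hsimple : Simple (FDRep.of (subrep ρ p hpinv)) := simple_of_invariant _ hmin
    obtain ⟨k₁, hk₁⟩ := hchar _ hsimple g
    rw [char_of_eq, char_of_eq] at hk₁
    obtain ⟨q, hqinv, hpq⟩ := exists_invariant_compl ρ p hpinv
    have hsplit : ∀ h : G, LinearMap.trace ℂ V (ρ h)
        = LinearMap.trace ℂ p (subrep ρ p hpinv h) + LinearMap.trace ℂ q (subrep ρ q hqinv h) :=
      fun h => trace_split (ρ h) p q hpq (hpinv h) (hqinv h)
    have hq_rank : finrank ℂ q ≤ n := by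
      have hsum := Submodule.finrank_add_eq_of_isCompl hpq
      have hp1 : 0 < finrank ℂ p := finrank_pos
      omega
    obtain ⟨k₂, hk₂⟩ := ih q hq_rank (subrep ρ q hqinv) g
    refine ⟨k₁ + k₂, ?_⟩
    rw [hsplit g, hsplit g⁻¹]
    push_cast
    linear_combination hk₁ + hk₂

def leftReg : Representation ℂ G (G → ℂ) where
  toFun g := LinearMap.funLeft ℂ ℂ (fun x => g⁻¹ * x)
  map_one' := by ext v x; simp [LinearMap.funLeft]
  map_mul' a b := by ext v x; simp [LinearMap.funLeft, mul_assoc]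

lemma leftReg_apply (g : G) (v : G → ℂ) (x : G) : leftReg g v x = v (g⁻¹ * x) := rfl


end CayleyAux

open Module LinearMap

/-- If `χ(g) + χ(g⁻¹) ∈ ℤ` for all irreducible `χ` and all `g`, then every normal
Cayley graph on `G` is integral. -/
theorem stmt8 (G : Type) [Group G] [Fintype G] [DecidableEq G]
    (hchar : ∀ (V : FDRep ℂ G), Simple V → ∀ g : G,
      ∃ k : ℤ, V.character g + V.character g⁻¹ = (k : ℂ)) :
    ∀ S : Finset G, (1 : G) ∉ S → (∀ s ∈ S, s⁻¹ ∈ S) →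
      (∀ g : G, ∀ s ∈ S, g * s * g⁻¹ ∈ S) →
      ∀ μ ∈ spectrum ℂ (Matrix.of fun g h : G => if g * h⁻¹ ∈ S then (1 : ℂ) else 0),
        ∃ k : ℤ, μ = (k : ℂ) := by
  intro S h1S hSinv hSconj μ hμ
  set A : Matrix G G ℂ := Matrix.of fun g h : G => if g * h⁻¹ ∈ S then (1 : ℂ) else 0 with hA
  -- μ is an eigenvalue of T = toLin' A
  set T : (G → ℂ) →ₗ[ℂ] (G → ℂ) := Matrix.toLin' A with hT
  have hμT : μ ∈ spectrum ℂ T := by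
    have := AlgEquiv.spectrum_eq (Matrix.toLinAlgEquiv' (R := ℂ) (n := G)) A
    rw [← this] at hμ
    exact hμ
  have heig : Module.End.HasEigenvalue T μ :=
    Module.End.hasEigenvalue_iff_mem_spectrum.mpr hμT
  set E : Submodule ℂ (G → ℂ) := Module.End.eigenspace T μ with hE
  have hEbot : E ≠ ⊥ := heig
  -- T is the sum of left translations over S
  have hTsum : ∀ v : G → ℂ, T v = ∑ s ∈ S, leftReg s v := by
    intro v
    funext x
    have lhs : T v x = ∑ y : G, (if x * y⁻¹ ∈ S then (1:ℂ) else 0) * v y := by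
      rw [hT, Matrix.toLin'_apply]
      simp [Matrix.mulVec, dotProduct, hA]
    have rhs : (∑ s ∈ S, leftReg s v) x = ∑ s ∈ S, v (s⁻¹ * x) := by
      rw [Finset.sum_apply]
      rfl
    rw [lhs, rhs]
    calc ∑ y : G, (if x * y⁻¹ ∈ S then (1:ℂ) else 0) * v y
        = ∑ y : G, (if x * y⁻¹ ∈ S then v y else 0) := by
          refine Finset.sum_congr rfl fun y _ => ?_
          rw [ite_mul, one_mul, zero_mul]
      _ = ∑ s : G, (if s ∈ S then v (s⁻¹ * x) else 0) := by
          refine (Fintype.sum_equiv ((Equiv.inv G).trans (Equiv.mulRight x)) _ _ ?_).symm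
          intro s
          simp only [Equiv.trans_apply, Equiv.inv_apply, Equiv.coe_mulRight]
          have hsx : x * (s⁻¹ * x)⁻¹ = s := by group
          rw [hsx]
      _ = ∑ s ∈ S, v (s⁻¹ * x) := by rw [Finset.sum_ite_mem, Finset.univ_inter]
  -- E is invariant under left translations
  have hconjmem : ∀ (g : G) (s : G), s ∈ S ↔ g⁻¹ * s * g ∈ S := by
    intro g s
    constructor
    · intro hs
      have := hSconj g⁻¹ s hs
      rwa [inv_inv] at this
    · intro hs
      have := hSconj g _ hs
      have he : g * (g⁻¹ * s * g) * g⁻¹ = s := by group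
      rwa [he] at this
  have hEinv : ∀ g : G, ∀ v ∈ E, leftReg g v ∈ E := by
    intro g v hv
    rw [hE, Module.End.mem_eigenspace_iff] at hv ⊢
    have hcomm : T (leftReg g v) = leftReg g (T v) := by
      rw [hTsum, hTsum v, map_sum]
      refine Finset.sum_equiv
        ⟨fun s => g⁻¹ * s * g, fun s => g * s * g⁻¹, fun s => by group, fun s => by group⟩ ?_ ?_
      · intro s
        simpa using hconjmem g s
      · intro s hs
        funext x
        simp only [Equiv.coe_fn_mk, leftReg_apply]
        congr 1
        group
    rw [hcomm, hv, map_smul]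
  haveI : Nontrivial E := Submodule.nontrivial_iff_ne_bot.mpr hEbot
  have hd : 0 < finrank ℂ E := finrank_pos
  have hTE : ∀ v ∈ E, T v ∈ E := by
    intro v hv
    have hv' := Module.End.mem_eigenspace_iff.mp hv
    rw [hv']
    exact E.smul_mem μ hv
  have htrace1 : LinearMap.trace ℂ E (T.restrict hTE) = μ * (finrank ℂ E : ℂ) := by
    have hid : T.restrict hTE = μ • LinearMap.id := by
      apply LinearMap.ext
      rintro ⟨v, hv⟩
      apply Subtype.ext
      have hv' := Module.End.mem_eigenspace_iff.mp hv
      simp [LinearMap.restrict_apply, hv']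
    rw [hid, map_smul, LinearMap.trace_id, smul_eq_mul]
  have htrace2 : T.restrict hTE = ∑ s ∈ S, subrep leftReg E hEinv s := by
    apply LinearMap.ext
    rintro ⟨v, hv⟩
    apply Subtype.ext
    rw [LinearMap.restrict_apply]
    have h2 : ((∑ s ∈ S, subrep leftReg E hEinv s) ⟨v, hv⟩ : G → ℂ)
        = ∑ s ∈ S, leftReg s v := by
      rw [LinearMap.sum_apply]
      rw [Submodule.coe_sum]
      rfl
    rw [h2]
    exact hTsum v
  -- sum of character values
  have hks : ∀ s : G, ∃ k : ℤ, LinearMap.trace ℂ E (subrep leftReg E hEinv s)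
      + LinearMap.trace ℂ E (subrep leftReg E hEinv s⁻¹) = (k : ℂ) :=
    fun s => trace_add_trace_inv_int hchar (finrank ℂ E) E le_rfl (subrep leftReg E hEinv) s
  choose kk hkk using hks
  have hsum1 : μ * (finrank ℂ E : ℂ) = ∑ s ∈ S, LinearMap.trace ℂ E (subrep leftReg E hEinv s) := by
    rw [← htrace1, htrace2, map_sum]
  have hsuminv : ∑ s ∈ S, LinearMap.trace ℂ E (subrep leftReg E hEinv s⁻¹)
      = ∑ s ∈ S, LinearMap.trace ℂ E (subrep leftReg E hEinv s) := by
    refine Finset.sum_equiv (Equiv.inv G) ?_ ?_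
    · intro s
      simp only [Equiv.inv_apply]
      constructor
      · intro hs; exact hSinv s hs
      · intro hs
        have := hSinv _ hs
        rwa [inv_inv] at this
    · intro s hs
      rfl
  have hsum2 : 2 * (μ * (finrank ℂ E : ℂ)) = ((∑ s ∈ S, kk s : ℤ) : ℂ) := by
    push_cast
    rw [← Finset.sum_congr rfl (fun s (_ : s ∈ S) => hkk s)]
    rw [Finset.sum_add_distrib, hsuminv, ← hsum1]
    ring
  -- rationality of μ
  set K : ℤ := ∑ s ∈ S, kk s with hK
  have hdc : ((finrank ℂ E : ℂ)) ≠ 0 := Nat.cast_ne_zero.mpr hd.ne'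
  have hμdiv : μ = (K : ℂ) / (2 * (finrank ℂ E : ℂ)) := by
    rw [eq_div_iff (mul_ne_zero two_ne_zero hdc)]
    linear_combination hsum2
  set q : ℚ := (K : ℚ) / (2 * (finrank ℂ E : ℚ)) with hq
  have hμq : μ = (q : ℂ) := by
    rw [hμdiv, hq]
    push_cast
    ring
  -- integrality of μ over ℤ
  set A₀ : Matrix G G ℤ := Matrix.of (fun g h : G => if g * h⁻¹ ∈ S then (1:ℤ) else 0) with hA₀
  have hmapA : A = A₀.map (Int.castRingHom ℂ) := by
    ext i j
    simp [hA, hA₀, Matrix.map_apply, apply_ite]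
  have hroot : Polynomial.eval μ A.charpoly = 0 := by
    have hnu : ¬ IsUnit (algebraMap ℂ (Matrix G G ℂ) μ - A) := spectrum.mem_iff.mp hμ
    have hdet : (algebraMap ℂ (Matrix G G ℂ) μ - A).det = 0 := by
      by_contra hne
      exact hnu ((Matrix.isUnit_iff_isUnit_det _).mpr (isUnit_iff_ne_zero.mpr hne))
    have hcm : (Matrix.charmatrix A).map (Polynomial.evalRingHom μ)
        = algebraMap ℂ (Matrix G G ℂ) μ - A := by
      ext i j
      by_cases hij : i = j
      · subst hij
        simp [Matrix.charmatrix_apply_eq, Matrix.algebraMap_matrix_apply]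
      · simp [Matrix.charmatrix_apply_ne _ _ _ hij, Matrix.algebraMap_matrix_apply, hij]
    have heval : Polynomial.eval μ A.charpoly
        = ((Matrix.charmatrix A).map (Polynomial.evalRingHom μ)).det := by
      rw [Matrix.charpoly]
      exact RingHom.map_det (Polynomial.evalRingHom μ) _
    rw [heval, hcm, hdet]
  have hint : IsIntegral ℤ μ := by
    refine ⟨A₀.charpoly, A₀.charpoly_monic, ?_⟩
    rw [Polynomial.eval₂_eq_eval_map]
    have hcp : A₀.charpoly.map (algebraMap ℤ ℂ) = A.charpoly := by
      rw [hmapA, Matrix.charpoly_map]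
      rfl
    rw [hcp]
    exact hroot
  have hqint : IsIntegral ℤ q := by
    have hinj : Function.Injective (algebraMap ℚ ℂ) := (algebraMap ℚ ℂ).injective
    rw [← isIntegral_algebraMap_iff hinj]
    rw [eq_ratCast (algebraMap ℚ ℂ) q]
    rw [← hμq]
    exact hint
  obtain ⟨k, hk⟩ := IsIntegrallyClosed.isIntegral_iff.mp hqint
  refine ⟨k, ?_⟩
  rw [hμq, ← hk]
  push_cast
  rfl
end

section
/- If G is a finite rational group (every conjugacy class contains all generators of the cyclic subgroups its elements generate, equivalently all character values are rational), then every normal Cayley graph on G is integral. -/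
open Finset LinearMap


private lemma stmt10_traceA {V : Type*} [AddCommGroup V] [Module ℂ V] [FiniteDimensional ℂ V]
    (f : Module.End ℂ V) {n : ℕ} (hn : 0 < n) (hf : f ^ n = 1)
    {ζ : ℂ} (hζ : IsPrimitiveRoot ζ n) :
    ∃ d : ℕ → ℕ, ∀ k : ℕ,
      trace ℂ V (f ^ k) = ∑ j ∈ range n, (d j : ℂ) * ζ ^ (j * k) := by
  have hζ0 : ζ ≠ 0 := hζ.ne_zero hn.ne'
  have hζn : ζ ^ n = 1 := hζ.pow_eq_one
  have hζin : ζ⁻¹ ^ n = 1 := by rw [inv_pow, hζn, inv_one]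
  have hNn : (n : ℂ) ≠ 0 := Nat.cast_ne_zero.mpr hn.ne'
  set P : ℕ → Module.End ℂ V := fun j => (n : ℂ)⁻¹ • ∑ i ∈ range n, ζ⁻¹ ^ (i * j) • f ^ i
    with hPdef
  have hPj : ∀ j, P j = (n : ℂ)⁻¹ • ∑ i ∈ range n, ζ⁻¹ ^ (i * j) • f ^ i := fun j => rfl
  have hfP : ∀ j, f * P j = ζ ^ j • P j := by
    intro j
    set g : ℕ → Module.End ℂ V := fun i => (ζ ^ j * ζ⁻¹ ^ (i * j)) • f ^ i with hg
    have h1 : ∀ i, ζ⁻¹ ^ (i * j) • f ^ (i + 1) = g (i + 1) := by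
      intro i
      rw [hg]
      simp only
      congr 1
      rw [add_mul, one_mul, pow_add, ← mul_assoc, mul_comm (ζ ^ j), mul_assoc, ← mul_pow,
        mul_inv_cancel₀ hζ0, one_pow, mul_one]
    have hζnj : ζ⁻¹ ^ (n * j) = 1 := by rw [pow_mul, hζin, one_pow]
    have hgn : g n = g 0 := by
      rw [hg]
      simp only
      rw [hζnj, hf, Nat.zero_mul, pow_zero, mul_one, pow_zero]
    have h2 : ∑ i ∈ range n, g (i + 1) = ∑ i ∈ range n, g i := by
      obtain ⟨n', rfl⟩ : ∃ n', n = n' + 1 := ⟨n - 1, (Nat.succ_pred_eq_of_pos hn).symm⟩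
      rw [Finset.sum_range_succ (fun i => g (i + 1)) n', Finset.sum_range_succ' g n']
      simp only [hgn]
    calc f * P j = (n : ℂ)⁻¹ • ∑ i ∈ range n, ζ⁻¹ ^ (i * j) • f ^ (i + 1) := by
          rw [hPj, mul_smul_comm, Finset.mul_sum]
          congr 1
          refine Finset.sum_congr rfl fun i _ => ?_
          rw [mul_smul_comm, pow_succ']
      _ = (n : ℂ)⁻¹ • ∑ i ∈ range n, g i := by rw [funext h1, h2]
      _ = ζ ^ j • P j := by
          rw [hPj, smul_comm (ζ ^ j) ((n : ℂ)⁻¹)]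
          congr 1
          rw [Finset.smul_sum]
          refine Finset.sum_congr rfl fun i _ => ?_
          rw [hg]
          simp only
          rw [smul_smul]
  have hfkP : ∀ k j, f ^ k * P j = ζ ^ (j * k) • P j := by
    intro k j
    induction k with
    | zero => simp
    | succ k ih =>
      rw [pow_succ', mul_assoc, ih, mul_smul_comm, hfP, smul_smul, ← pow_add]
      norm_num [Nat.mul_succ, Nat.add_comm]
  have hPsum : ∑ j ∈ range n, P j = 1 := by
    simp only [hPj, ← Finset.smul_sum]
    rw [Finset.sum_comm]
    have key : ∀ i ∈ range n, ∑ j ∈ range n, ζ⁻¹ ^ (i * j) • f ^ i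
        = (if i = 0 then (n : ℂ) else 0) • f ^ i := by
      intro i hi
      rw [← Finset.sum_smul]
      congr 1
      have hpm : ∀ j, ζ⁻¹ ^ (i * j) = (ζ⁻¹ ^ i) ^ j := fun j => by rw [← pow_mul]
      rw [funext hpm]
      by_cases hi0 : i = 0
      · subst hi0; simp
      · rw [if_neg hi0]
        have hne : ζ⁻¹ ^ i ≠ 1 :=
          (hζ.inv).pow_ne_one_of_pos_of_lt hi0 (Finset.mem_range.mp hi)
        rw [geom_sum_eq hne, ← pow_mul, Nat.mul_comm, pow_mul, hζin, one_pow, sub_self,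
          zero_div]
    rw [Finset.sum_congr rfl key, Finset.sum_eq_single 0 (fun i _ hi0 => by
      rw [if_neg hi0, zero_smul]) (fun h => absurd (Finset.mem_range.mpr hn) h)]
    rw [if_pos rfl, pow_zero, smul_smul, inv_mul_cancel₀ hNn, one_smul]
  have hProj : ∀ j, P j * P j = P j := by
    intro j
    have step : P j * P j = (n : ℂ)⁻¹ • ∑ i ∈ range n, ζ⁻¹ ^ (i * j) • (f ^ i * P j) := by
      conv_lhs => rw [hPj j]
      rw [smul_mul_assoc, Finset.sum_mul]
      congr 1
    rw [step]
    have key : ∀ i ∈ range n, ζ⁻¹ ^ (i * j) • (f ^ i * P j) = P j := by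
      intro i _
      rw [hfkP i j, smul_smul, Nat.mul_comm j i, ← mul_pow, inv_mul_cancel₀ hζ0, one_pow,
        one_smul]
    rw [Finset.sum_congr rfl key, Finset.sum_const, Finset.card_range, ← Nat.cast_smul_eq_nsmul ℂ,
      smul_smul, inv_mul_cancel₀ hNn, one_smul]
  -- traces of the projections are natural numbers
  have htrP : ∀ j, trace ℂ V (P j) = (Module.finrank ℂ (LinearMap.range (P j)) : ℂ) := by
    intro j
    have hproj : LinearMap.IsProj (LinearMap.range (P j)) (P j) := by
      refine ⟨fun x => LinearMap.mem_range_self _ x, ?_⟩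
      rintro x ⟨y, rfl⟩
      rw [← Module.End.mul_apply, hProj j]
    exact hproj.trace
  refine ⟨fun j => Module.finrank ℂ (LinearMap.range (P j)), fun k => ?_⟩
  calc trace ℂ V (f ^ k) = trace ℂ V (∑ j ∈ range n, f ^ k * P j) := by
        rw [← Finset.mul_sum, hPsum, mul_one]
    _ = ∑ j ∈ range n, trace ℂ V (f ^ k * P j) := map_sum _ _ _
    _ = ∑ j ∈ range n, (Module.finrank ℂ (LinearMap.range (P j)) : ℂ) * ζ ^ (j * k) := by
        refine Finset.sum_congr rfl fun j _ => ?_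
        rw [hfkP k j, map_smul, smul_eq_mul, htrP j, mul_comm]


private lemma stmt10_ratB {n : ℕ} (hn : 0 < n) {ζ : ℂ} (hζ : IsPrimitiveRoot ζ n) (d : ℕ → ℕ)
    (H : ∀ k : ℕ, Nat.Coprime k n →
      ∑ j ∈ range n, (d j : ℂ) * ζ ^ (j * k) = ∑ j ∈ range n, (d j : ℂ) * ζ ^ j) :
    ∃ q : ℚ, ∑ j ∈ range n, (d j : ℂ) * ζ ^ j = (q : ℂ) := by
  haveI : NeZero n := ⟨hn.ne'⟩
  set n' : ℕ+ := ⟨n, hn⟩ with hn'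
  set L := CyclotomicField n ℚ with hL
  haveI : IsCyclotomicExtension {n} ℚ L := CyclotomicField.isCyclotomicExtension n ℚ
  haveI : FiniteDimensional ℚ L := IsCyclotomicExtension.finiteDimensional {n} ℚ L
  haveI : IsGalois ℚ L := IsCyclotomicExtension.isGalois {n} ℚ L
  haveI : Algebra.IsAlgebraic ℚ L := Algebra.IsAlgebraic.of_finite ℚ L
  set φ : L →ₐ[ℚ] ℂ := IsAlgClosed.lift with hφ
  have hφinj : Function.Injective φ := φ.toRingHom.injective
  set ζL : L := IsCyclotomicExtension.zeta n ℚ L with hζL'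
  have hζL : IsPrimitiveRoot ζL n := IsCyclotomicExtension.zeta_spec n ℚ L
  -- φ ζL is a primitive n-th root of unity in ℂ
  have hφζL : IsPrimitiveRoot (φ ζL) n := hζL.map_of_injective hφinj
  -- write ζ as a coprime power of φ ζL
  obtain ⟨b, hbn, hb⟩ : ∃ i < n, (φ ζL) ^ i = ζ := hφζL.eq_pow_of_pow_eq_one hζ.pow_eq_one
  have hbcop : Nat.Coprime b n := (hφζL.pow_iff_coprime hn b).mp (hb ▸ hζ)
  set ζL' : L := ζL ^ b with hζL''
  have hφζ : φ ζL' = ζ := by rw [hζL'', map_pow, hb]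
  have hζL'prim : IsPrimitiveRoot ζL' n := hζL.pow_of_coprime b hbcop
  set tL : L := ∑ j ∈ range n, (d j : L) * ζL' ^ j with htL
  have hmap : ∀ k : ℕ, φ (∑ j ∈ range n, (d j : L) * ζL' ^ (j * k))
      = ∑ j ∈ range n, (d j : ℂ) * ζ ^ (j * k) := by
    intro k
    rw [map_sum]
    exact Finset.sum_congr rfl fun j _ => by rw [map_mul, map_pow, hφζ, map_natCast]
  have hmapt : φ tL = ∑ j ∈ range n, (d j : ℂ) * ζ ^ j := by
    have h1 := hmap 1
    simp only [Nat.mul_one] at h1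
    rw [htL, map_sum]
    rw [map_sum] at h1
    exact h1
  have hfix : ∀ σ : L ≃ₐ[ℚ] L, σ tL = tL := by
    intro σ
    set k : ℕ := ((hζL'prim.autToPow ℚ σ : (ZMod n)ˣ) : ZMod n).val with hk'
    have hk : Nat.Coprime k n := ZMod.val_coe_unit_coprime _
    have hσζ : σ ζL' = ζL' ^ k := (hζL'prim.autToPow_spec ℚ σ).symm
    have hσt : σ tL = ∑ j ∈ range n, (d j : L) * ζL' ^ (j * k) := by
      rw [htL, map_sum]
      refine Finset.sum_congr rfl fun j _ => ?_
      rw [map_mul, map_pow, hσζ, map_natCast, ← pow_mul, Nat.mul_comm k j]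
    apply hφinj
    rw [hσt, hmap k, H k hk, hmapt]
  have hbot : tL ∈ (⊥ : IntermediateField ℚ L) := by
    rw [← IsGalois.fixedField_fixingSubgroup (⊥ : IntermediateField ℚ L)]
    exact fun σ => hfix σ
  obtain ⟨q, hq⟩ := IntermediateField.mem_bot.mp hbot
  refine ⟨q, ?_⟩
  rw [← hmapt, ← hq]
  have : φ (algebraMap ℚ L q) = algebraMap ℚ ℂ q := φ.commutes q
  rw [this, eq_ratCast]


section Stmt10Aux

variable {G : Type*} [Group G] [Fintype G] [DecidableEq G]

private def stmt10T (g : G) : (G → ℂ) →ₗ[ℂ] (G → ℂ) where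
  toFun v := fun x => v (g⁻¹ * x)
  map_add' _ _ := rfl
  map_smul' _ _ := rfl

private lemma stmt10T_apply (g : G) (v : G → ℂ) (x : G) : stmt10T g v x = v (g⁻¹ * x) := rfl

private lemma stmt10T_mul (g h : G) : (stmt10T g) * (stmt10T h) = stmt10T (g * h) := by
  refine LinearMap.ext fun v => funext fun x => ?_
  simp [stmt10T_apply, Module.End.mul_apply, mul_assoc]

private lemma stmt10T_one : (stmt10T (1 : G)) = 1 := by
  refine LinearMap.ext fun v => funext fun x => ?_
  simp [stmt10T_apply]

end Stmt10Aux

/-- Every normal Cayley graph on a finite rational group is integral. -/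
theorem stmt10 (G : Type*) [Group G] [Fintype G] [DecidableEq G]
    (hrat : ∀ g x : G, Subgroup.zpowers x = Subgroup.zpowers g → IsConj g x) :
    ∀ S : Finset G, (1 : G) ∉ S → (∀ s ∈ S, s⁻¹ ∈ S) →
      (∀ g : G, ∀ s ∈ S, g * s * g⁻¹ ∈ S) →
      ∀ μ ∈ spectrum ℂ (Matrix.of fun g h : G => if g * h⁻¹ ∈ S then (1 : ℂ) else 0),
        ∃ k : ℤ, μ = (k : ℂ) := by
  intro S h1S hinvS hconjS μ hμ
  classical
  set A : Matrix G G ℂ := Matrix.of fun g h : G => if g * h⁻¹ ∈ S then (1 : ℂ) else 0 with hA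
  set n : ℕ := Fintype.card G with hn'
  have hn : 0 < n := Fintype.card_pos
  -- the linear map given by A
  set M : Module.End ℂ (G → ℂ) := Matrix.toLinAlgEquiv' A with hM
  -- sum formula for M
  have hMsum : ∀ (v : G → ℂ) (x : G), M v x = ∑ s ∈ S, v (s⁻¹ * x) := by
    intro v x
    rw [hM]
    rw [Matrix.toLinAlgEquiv'_apply, Matrix.mulVec, dotProduct]
    simp only [hA, Matrix.of_apply, ite_mul, one_mul, zero_mul]
    rw [Fintype.sum_equiv ((Equiv.inv G).trans (Equiv.mulLeft x))
      (fun h => if x * h⁻¹ ∈ S then v h else 0)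
      (fun s => if s ∈ S then v (s⁻¹ * x) else 0)]
    · rw [← Finset.sum_filter, Finset.filter_mem_eq_inter, Finset.univ_inter]
    · intro h
      simp only [Equiv.trans_apply, Equiv.inv_apply, Equiv.coe_mulLeft]
      congr 1
      simp [mul_assoc]
  -- M commutes with each translation
  have hcomm : ∀ (g : G) (v : G → ℂ), M (stmt10T g v) = stmt10T g (M v) := by
    intro g v
    funext x
    rw [hMsum, stmt10T_apply, hMsum]
    refine Finset.sum_nbij' (fun s => g⁻¹ * s * g) (fun s => g * s * g⁻¹) ?_ ?_ ?_ ?_ ?_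
    · intro s hs
      simpa using hconjS g⁻¹ s hs
    · intro s hs
      exact hconjS g s hs
    · intro s _; group
    · intro s _; group
    · intro s _
      rw [stmt10T_apply]
      congr 1
      group
  -- the eigenspace
  have hμ' : μ ∈ spectrum ℂ M := by
    rw [hM, AlgEquiv.spectrum_eq]
    exact hμ
  have hEig : Module.End.HasEigenvalue M μ := Module.End.hasEigenvalue_iff_mem_spectrum.mpr hμ'
  set V : Submodule ℂ (G → ℂ) := Module.End.eigenspace M μ with hV
  have hTV : ∀ (g : G), ∀ v ∈ V, stmt10T g v ∈ V := by
    intro g v hv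
    rw [hV, Module.End.mem_eigenspace_iff] at hv ⊢
    rw [hcomm, hv, map_smul]
  -- restricted operators
  set ρ : G → Module.End ℂ V := fun g => (stmt10T g).restrict (hTV g) with hρ
  have hρ_apply : ∀ (g : G) (v : V), (ρ g v : G → ℂ) = stmt10T g (v : G → ℂ) := by
    intro g v; rfl
  have hρ_mul : ∀ g h : G, ρ g * ρ h = ρ (g * h) := by
    intro g h
    refine LinearMap.ext fun v => Subtype.ext ?_
    rw [Module.End.mul_apply, hρ_apply, hρ_apply, hρ_apply, ← stmt10T_mul, Module.End.mul_apply]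
  have hρ_one : ρ (1 : G) = 1 := by
    refine LinearMap.ext fun v => Subtype.ext ?_
    rw [hρ_apply, stmt10T_one]
    rfl
  have hρ_pow : ∀ (g : G) (k : ℕ), ρ g ^ k = ρ (g ^ k) := by
    intro g k
    induction k with
    | zero => rw [pow_zero, pow_zero, hρ_one]
    | succ k ih => rw [pow_succ, pow_succ, ih, hρ_mul]
  -- traces
  set τ : G → ℂ := fun g => trace ℂ V (ρ g) with hτ
  have hτ_conj : ∀ g h : G, τ (h * g * h⁻¹) = τ g := by
    intro g h
    rw [hτ]
    simp only
    rw [← hρ_mul, ← hρ_mul, trace_mul_comm, hρ_mul h g, hρ_mul h⁻¹ (h * g),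
      inv_mul_cancel_left]
  -- invariance of τ under coprime powers (uses rationality of G)
  have hτ_pow : ∀ (s : G) (k : ℕ), Nat.Coprime k n → τ (s ^ k) = τ s := by
    intro s k hk
    have hcop : Nat.Coprime k (orderOf s) := hk.coprime_dvd_right (orderOf_dvd_card)
    haveI : NeZero (orderOf s) := ⟨(orderOf_pos s).ne'⟩
    set c := orderOf s with hc
    set u : (ZMod c)ˣ := ZMod.unitOfCoprime k hcop with hu
    set m : ℕ := ((u⁻¹ : (ZMod c)ˣ) : ZMod c).val with hm
    have hmod : k * m ≡ 1 [MOD c] := by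
      have h1 : ((k * m : ℕ) : ZMod c) = ((1 : ℕ) : ZMod c) := by
        push_cast
        rw [ZMod.natCast_val]
        rw [show ((k : ZMod c)) = (u : ZMod c) from (ZMod.coe_unitOfCoprime k hcop).symm]
        rw [ZMod.cast_id]
        rw [← Units.val_mul, mul_inv_cancel, Units.val_one]
      exact (ZMod.natCast_eq_natCast_iff _ _ _).mp h1
    have hpows : s ^ (k * m) = s ^ 1 := pow_eq_pow_iff_modEq.mpr (by simpa using hmod)
    have hzp : Subgroup.zpowers (s ^ k) = Subgroup.zpowers s := by
      apply le_antisymm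
      · rw [Subgroup.zpowers_le]
        exact ⟨(k : ℤ), by show s ^ (k : ℤ) = s ^ k; rw [zpow_natCast]⟩
      · rw [Subgroup.zpowers_le]
        exact ⟨(m : ℤ), by
          show (s ^ k) ^ (m : ℤ) = s
          rw [zpow_natCast, ← pow_mul, hpows, pow_one]⟩
    obtain ⟨h, hh⟩ := isConj_iff.mp (hrat s (s ^ k) hzp)
    rw [← hh]
    exact hτ_conj s h
  -- the trace identity:  μ · dim V = ∑_{s ∈ S} τ s
  have hsum : μ * (Module.finrank ℂ V : ℂ) = ∑ s ∈ S, τ s := by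
    have hid : (μ • 1 : Module.End ℂ V) = ∑ s ∈ S, ρ s := by
      refine LinearMap.ext fun v => Subtype.ext ?_
      have h1 : ((∑ s ∈ S, ρ s) v : G → ℂ) = ∑ s ∈ S, ((ρ s v : G → ℂ)) := by
        rw [LinearMap.sum_apply]
        exact AddSubmonoidClass.coe_finset_sum _ _
      calc ((μ • 1 : Module.End ℂ V) v : G → ℂ) = μ • (v : G → ℂ) := rfl
        _ = M (v : G → ℂ) := (Module.End.mem_eigenspace_iff.mp v.2).symm
        _ = ∑ s ∈ S, ((ρ s v : G → ℂ)) := by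
            funext x
            rw [hMsum, Finset.sum_apply]
            exact Finset.sum_congr rfl fun s _ => rfl
        _ = ((∑ s ∈ S, ρ s) v : G → ℂ) := h1.symm
    have htr := congrArg (trace ℂ V) hid
    rw [map_smul, trace_one, map_sum] at htr
    simpa [smul_eq_mul] using htr
  have hd0 : Module.finrank ℂ V ≠ 0 := by
    intro h0
    exact hEig (Submodule.finrank_eq_zero.mp h0)
  -- rationality of each τ s
  have hτ_rat : ∀ s : G, s ∈ S → ∃ qq : ℚ, τ s = (qq : ℂ) := by
    intro s _
    have hfn : ρ s ^ n = 1 := by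
      rw [hρ_pow, hn', pow_card_eq_one, hρ_one]
    obtain ⟨ζ, hζ⟩ : ∃ ζ : ℂ, IsPrimitiveRoot ζ n :=
      ⟨_, Complex.isPrimitiveRoot_exp n hn.ne'⟩
    obtain ⟨d, hdtr⟩ := stmt10_traceA (ρ s) hn hfn hζ
    have h2 := hdtr 1
    simp only [pow_one, Nat.mul_one] at h2
    have H : ∀ k : ℕ, Nat.Coprime k n →
        ∑ j ∈ range n, (d j : ℂ) * ζ ^ (j * k) = ∑ j ∈ range n, (d j : ℂ) * ζ ^ j := by
      intro k hk
      rw [← hdtr k, ← h2, hρ_pow]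
      exact hτ_pow s k hk
    obtain ⟨qq, hqq⟩ := stmt10_ratB hn hζ d H
    exact ⟨qq, h2.trans hqq⟩
  choose q hq using hτ_rat
  -- μ is rational
  set Q : ℚ := (∑ s ∈ S.attach, q s s.2) / (Module.finrank ℂ V : ℚ) with hQdef
  have hτsum : ∑ s ∈ S, τ s = ((∑ s ∈ S.attach, q s s.2 : ℚ) : ℂ) := by
    rw [← Finset.sum_attach S τ]
    push_cast
    exact Finset.sum_congr rfl fun s _ => hq s s.2
  have hdC : (Module.finrank ℂ V : ℂ) ≠ 0 := Nat.cast_ne_zero.mpr hd0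
  have hμQ : μ = (Q : ℂ) := by
    have hQC : (Q : ℂ)
        = ((∑ s ∈ S.attach, q s s.2 : ℚ) : ℂ) / (Module.finrank ℂ V : ℂ) := by
      rw [hQdef]
      push_cast
      ring
    rw [hQC, eq_div_iff hdC]
    exact hsum.trans hτsum
  -- μ is an algebraic integer
  have hint : IsIntegral ℤ μ := by
    set B : Matrix G G ℤ := Matrix.of (fun g h : G => if g * h⁻¹ ∈ S then (1 : ℤ) else 0)
      with hB
    refine ⟨B.charpoly, B.charpoly_monic, ?_⟩
    have hmap : B.map (algebraMap ℤ ℂ) = A := by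
      ext g h
      simp [hB, hA, Matrix.map_apply, apply_ite]
    have hev : A.charpoly.eval μ = 0 := by
      have hnu : ¬ IsUnit ((algebraMap ℂ (Matrix G G ℂ)) μ - A) := spectrum.mem_iff.mp hμ
      have hdet : ((algebraMap ℂ (Matrix G G ℂ)) μ - A).det = 0 := by
        by_contra hne
        exact hnu ((Matrix.isUnit_iff_isUnit_det _).mpr (isUnit_iff_ne_zero.mpr hne))
      calc A.charpoly.eval μ
          = ((algebraMap ℂ (Matrix G G ℂ)) μ - A).det := by
            rw [Matrix.charpoly, eval_det, Matrix.matPolyEquiv_charmatrix]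
            congr 1
            rw [Polynomial.eval_sub, Polynomial.eval_X, Polynomial.eval_C]
            congr 1
        _ = 0 := hdet
    rw [Polynomial.eval₂_eq_eval_map, ← Matrix.charpoly_map B (algebraMap ℤ ℂ), hmap, hev]
  -- conclude: μ is a rational algebraic integer, hence an integer
  have hQalg : IsIntegral ℤ (algebraMap ℚ ℂ Q) := by
    rw [eq_ratCast]
    rwa [hμQ] at hint
  have hQint : IsIntegral ℤ Q := (isIntegral_algebraMap_iff ((algebraMap ℚ ℂ).injective)).mp hQalg
  obtain ⟨z, hz⟩ := IsIntegrallyClosed.isIntegral_iff.mp hQint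
  refine ⟨z, ?_⟩
  rw [hμQ, ← hz]
  push_cast
  norm_num
end

section
/- Let G be a finite nilpotent group that is inverse semi-rational. Then |G| is divisible by no prime other than 2 and 3. -/
/-- If an inverse semi-rational group has a central element of odd prime order `p`,
then `p = 3`. -/
lemma aux_central_isr {G : Type*} [Group G]
    (hisr : ∀ g x : G, Subgroup.zpowers x = Subgroup.zpowers g → IsConj g x ∨ IsConj g⁻¹ x)
    {z : G} (hz : z ∈ Subgroup.center G) {p : ℕ} (hp : p.Prime) (hord : orderOf z = p)
    (hp2 : p ≠ 2) : p = 3 := by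
  have hzne : z ≠ 1 := by
    intro h
    rw [h, orderOf_one] at hord
    exact hp.one_lt.ne' hord.symm
  have hpow : Subgroup.zpowers (z ^ 2) = Subgroup.zpowers z := by
    apply le_antisymm
    · rw [Subgroup.zpowers_le]
      exact Subgroup.pow_mem _ (Subgroup.mem_zpowers z) 2
    · rw [Subgroup.zpowers_le]
      have hodd : 2 * ((p + 1) / 2) = p + 1 := by
        have : ¬ 2 ∣ p := fun h => hp2 ((Nat.prime_dvd_prime_iff_eq Nat.prime_two hp).mp h).symm
        omega
      have hzz : (z ^ 2) ^ ((p + 1) / 2) = z := by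
        rw [← pow_mul, hodd, pow_succ, ← hord, pow_orderOf_eq_one, one_mul]
      exact ⟨(((p + 1) / 2 : ℕ) : ℤ), (zpow_natCast (z ^ 2) ((p + 1) / 2)).trans hzz⟩
  have hcentral : ∀ w : G, w ∈ Subgroup.center G → IsConj w (z ^ 2) → w = z ^ 2 := by
    rintro w hw ⟨c, hc⟩
    have hc' : (c : G) * w = z ^ 2 * c := hc
    have hcw : (c : G) * w = w * c := (Subgroup.mem_center_iff.mp hw c)
    exact mul_right_cancel (hcw.symm.trans hc')
  rcases hisr z (z ^ 2) hpow with h | h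
  · have h1 : z = z ^ 2 := hcentral z hz h
    have hz1 : z = 1 := by
      have : z * 1 = z * z := by rw [mul_one, ← sq]; exact h1
      exact (mul_left_cancel this).symm
    exact absurd hz1 hzne
  · have h1 : z⁻¹ = z ^ 2 := hcentral z⁻¹ (Subgroup.inv_mem _ hz) h
    have h3 : z ^ 3 = 1 := by
      have : z ^ 3 = z ^ 2 * z := by group
      rw [this, ← h1, inv_mul_cancel]
    have hdvd : p ∣ 3 := hord ▸ orderOf_dvd_of_pow_eq_one h3
    exact (Nat.prime_dvd_prime_iff_eq hp Nat.prime_three).mp hdvd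

/-- A finite nilpotent inverse semi-rational group is a `{2,3}`-group. -/
theorem stmt16 (G : Type*) [Group G] [Fintype G] [Group.IsNilpotent G]
    (hisr : ∀ g x : G, Subgroup.zpowers x = Subgroup.zpowers g → IsConj g x ∨ IsConj g⁻¹ x) :
    ∀ p : ℕ, p.Prime → p ∣ Fintype.card G → p = 2 ∨ p = 3 := by
  intro p hp hdvd
  by_cases hp2 : p = 2
  · exact Or.inl hp2
  right
  -- find a central element of order p
  haveI : Fact p.Prime := ⟨hp⟩
  have hn : ∀ {q : ℕ} [Fact q.Prime] (Q : Sylow q G), (Q : Subgroup G).Normal := by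
    intro q hq Q
    have h14 := (isNilpotent_of_finite_tfae (G := G)).out 0 3
    exact h14.mp inferInstance q hq Q
  obtain ⟨z, hz, hordz⟩ : ∃ z : G, z ∈ Subgroup.center G ∧ orderOf z = p := by
    classical
    have hn' : ∀ {q : ℕ} [Fact q.Prime] (Q : Sylow q G), (Q : Subgroup G).Normal := hn
    let e := Sylow.directProductOfNormal hn'
    have hcard0 : Nat.card G ≠ 0 := Nat.card_pos.ne'
    have hpdvd : p ∣ Nat.card G := by rwa [Nat.card_eq_fintype_card]
    have hpmem : p ∈ (Nat.card G).primeFactors := Nat.mem_primeFactors.mpr ⟨hp, hpdvd, hcard0⟩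
    let q : (Nat.card G).primeFactors := ⟨p, hpmem⟩
    -- in each Sylow p-subgroup find a central element of order p
    have hsyl : ∀ Q : Sylow p G, ∃ zQ : Q, zQ ∈ Subgroup.center Q ∧ orderOf zQ = p := by
      intro Q
      have hpg : IsPGroup p Q := Q.isPGroup'
      have hfac : (Nat.card G).factorization p ≠ 0 :=
        (Nat.Prime.factorization_pos_of_dvd hp hcard0 hpdvd).ne'
      have hcardQ : Nat.card Q = p ^ (Nat.card G).factorization p := Q.card_eq_multiplicity
      haveI : Nontrivial (Q : Subgroup G) := by
        rw [← Finite.one_lt_card_iff_nontrivial, hcardQ]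
        exact Nat.one_lt_pow hfac hp.one_lt
      haveI := hpg.center_nontrivial
      have hpgc : IsPGroup p (Subgroup.center (Q : Subgroup G)) :=
        hpg.to_subgroup (Subgroup.center (Q : Subgroup G))
      obtain ⟨n, hcn⟩ := IsPGroup.iff_card.mp hpgc
      have hdvdc : p ∣ Nat.card (Subgroup.center (Q : Subgroup G)) := by
        rw [hcn]
        refine dvd_pow_self p ?_
        rintro rfl
        rw [pow_zero] at hcn
        exact (Finite.one_lt_card_iff_nontrivial.mpr ‹_›).ne' hcn
      obtain ⟨z0, hz0⟩ := exists_prime_orderOf_dvd_card' p hdvdc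
      exact ⟨(z0 : Q), z0.2, by rw [Subgroup.orderOf_coe, hz0]⟩
    choose c hc1 hc2 using hsyl
    -- assemble an element of the product supported at the prime p
    let w : ∀ q' : (Nat.card G).primeFactors, ∀ Q : Sylow (q' : ℕ) G, Q :=
      Pi.mulSingle (M := fun q' : (Nat.card G).primeFactors => ∀ Q : Sylow (q' : ℕ) G, Q) q c
    have hwq : w q = c := Pi.mulSingle_eq_same (M := fun q' : (Nat.card G).primeFactors => ∀ Q : Sylow (q' : ℕ) G, Q) q c
    have hwo : ∀ q', q' ≠ q → w q' = 1 := fun q' h => Pi.mulSingle_eq_of_ne (M := fun q' : (Nat.card G).primeFactors => ∀ Q : Sylow (q' : ℕ) G, Q) h c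
    have hw1 : ∀ (q' : (Nat.card G).primeFactors) (Q : Sylow (q' : ℕ) G), w q' Q ^ p = 1 := by
      intro q' Q
      rcases eq_or_ne q' q with rfl | hne
      · rw [hwq, ← hc2 Q]
        exact pow_orderOf_eq_one _
      · rw [hwo q' hne]
        simp
    have hwne : w ≠ 1 := by
      intro h
      have h1 : c Classical.ofNonempty = 1 := by
        rw [← hwq, h]; simp
      have h2 := hc2 Classical.ofNonempty
      rw [h1, orderOf_one] at h2
      exact hp.one_lt.ne' h2.symm
    refine ⟨e w, ?_, ?_⟩
    · rw [Subgroup.mem_center_iff]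
      intro y
      obtain ⟨f, rfl⟩ := e.surjective y
      rw [← map_mul, ← map_mul]
      congr 1
      funext q' Q
      show f q' Q * w q' Q = w q' Q * f q' Q
      rcases eq_or_ne q' q with rfl | hne
      · rw [hwq]
        exact (Subgroup.mem_center_iff.mp (hc1 Q) (f q Q))
      · rw [hwo q' hne]
        simp
    · refine orderOf_eq_prime ?_ ?_
      · rw [← map_pow]
        have hwp : w ^ p = 1 := by
          funext q' Q
          exact hw1 q' Q
        rw [hwp, map_one]
      · intro h
        exact hwne (e.injective (by rw [h, map_one]))
  exact aux_central_isr hisr hz hp hordz hp2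
end
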